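/- arXiv:math/0703798 — 12 statements merged into one kernel-verified Lean document; each statement's English description precedes it below -/
import Mathlib

section
/- If L is a transfer operator for (A, α), then L(1) is a positive element belonging to the center of A. -/
open scoped ComplexStarModule

/-- If L is a transfer operator for (A, α), then L(1) is a positive
element belonging to the center of A. -/
theorem transfer_operator_L_one_central_positive
    {A : Type*} [NormedRing A] [StarRing A] [CStarRing A] [NormedAlgebra ℂ A]
    [CompleteSpace A] [StarModule ℂ A] [PartialOrder A] [StarOrderedRing A]
    (α : A →⋆ₐ[ℂ] A) (L : A →L[ℂ] A)
    (hpos : ∀ a : A, 0 ≤ a → 0 ≤ L a)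
    (htr : ∀ a b : A, L (α a * b) = a * L b) :
    0 ≤ L 1 ∧ ∀ a : A, a * L 1 = L 1 * a := by
  letI : CStarAlgebra A := { }
  have h1 : (0 : A) ≤ L 1 := hpos 1 zero_le_one
  -- L is star-preserving
  have hstar : ∀ a : A, L (star a) = star (L a) := by
    intro a
    have ha : a ∈ Submodule.span ℂ {x : A | 0 ≤ x} := by
      rw [CStarAlgebra.span_nonneg]; trivial
    induction ha using Submodule.span_induction with
    | mem x hx =>
      have hx' : (0 : A) ≤ x := hx
      rw [hx'.star_eq, (hpos x hx').star_eq]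
    | zero => simp
    | add x y _ _ hx hy => simp [map_add, hx, hy, star_add]
    | smul c x _ hx => simp [map_smul, hx, star_smul]
  have key : ∀ a : A, L (α a) = a * L 1 := by
    intro a
    simpa using htr a 1
  refine ⟨h1, fun a => ?_⟩
  have hsa : star (L 1) = L 1 := h1.star_eq
  calc a * L 1 = L (α a) := (key a).symm
    _ = star (L (α (star a))) := by
          rw [show α (star a) = star (α a) from map_star α a, hstar, star_star]
    _ = star (star a * L 1) := by rw [key]
    _ = L 1 * a := by rw [star_mul, star_star, hsa]
end

section
/- If L is a transfer operator for (A, α), then the range L(A) of L is a two-sided ideal of A. -/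
/-!
Since `L (α a * b) = a * L b`, the range of `L` is a left ideal. A positive linear map on a
C⋆-algebra commutes with `star`, because the algebra is spanned by its positive elements, which
`L` sends to self-adjoint ones. Hence the range of `L` is closed under `star`, and a left ideal
closed under `star` is also a right ideal: `x * y = star (star y * star x)`.
-/

lemma Ideal.isTwoSided_of_star_mem {R : Type*} [Ring R] [StarRing R] {I : Ideal R}
    (h : ∀ x ∈ I, star x ∈ I) : I.IsTwoSided where
  mul_mem_of_left {x} y hx := by
    simpa using h _ (I.mul_mem_left (star y) (h x hx))

def Ideal.rangeOfTransfer {R : Type*} [Ring R] (α : R → R) (L : R →+ R)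
    (htr : ∀ a b, L (α a * b) = a * L b) : Ideal R where
  carrier := Set.range L
  zero_mem' := ⟨0, map_zero L⟩
  add_mem' := by
    rintro _ _ ⟨a, rfl⟩ ⟨b, rfl⟩
    exact ⟨a + b, map_add L a b⟩
  smul_mem' a := by
    rintro _ ⟨b, rfl⟩
    exact ⟨α a * b, htr a b⟩

lemma LinearMap.map_star_of_isSelfAdjoint_of_nonneg {A B : Type*} [NonUnitalRing A] [Module ℂ A]
    [SMulCommClass ℂ A A] [IsScalarTower ℂ A A] [StarRing A] [TopologicalSpace A]
    [StarModule ℂ A] [NonUnitalContinuousFunctionalCalculus ℝ A IsSelfAdjoint] [PartialOrder A]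
    [StarOrderedRing A] [AddCommGroup B] [Module ℂ B] [StarAddMonoid B] [StarModule ℂ B]
    (f : A →ₗ[ℂ] B) (hf : ∀ a, 0 ≤ a → IsSelfAdjoint (f a)) (x : A) :
    f (star x) = star (f x) := by
  have hx : x ∈ Submodule.span ℂ {a : A | 0 ≤ a} := CStarAlgebra.span_nonneg (A := A) ▸ trivial
  induction hx using Submodule.span_induction with
  | mem a ha => rw [(IsSelfAdjoint.of_nonneg ha).star_eq, (hf a ha).star_eq]
  | zero => simp
  | add x y _ _ hx hy => simp only [star_add, map_add, hx, hy]
  | smul c x _ hx => simp only [star_smul, map_smul, hx]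

/-- If L is a transfer operator for (A, α), then the range L(A)
is a two-sided ideal of A. -/
theorem transfer_operator_range_two_sided_ideal
    {A : Type*} [NormedRing A] [StarRing A] [CStarRing A] [NormedAlgebra ℂ A]
    [CompleteSpace A] [StarModule ℂ A] [PartialOrder A] [StarOrderedRing A]
    (α : A →⋆ₐ[ℂ] A) (L : A →L[ℂ] A)
    (hpos : ∀ a : A, 0 ≤ a → 0 ≤ L a)
    (htr : ∀ a b : A, L (α a * b) = a * L b) :
    ∃ I : TwoSidedIdeal A, (I : Set A) = Set.range L := by
  -- bundled so that the continuous functional calculus instances are found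
  let _ : CStarAlgebra A :=
    { ‹NormedRing A›, ‹StarRing A›, ‹CStarRing A›, ‹NormedAlgebra ℂ A›, ‹CompleteSpace A›,
      ‹StarModule ℂ A› with }
  have hstar : ∀ x, L (star x) = star (L x) :=
    (L : A →ₗ[ℂ] A).map_star_of_isSelfAdjoint_of_nonneg fun a ha => .of_nonneg (hpos a ha)
  let I := Ideal.rangeOfTransfer α L.toLinearMap.toAddMonoidHom htr
  have : I.IsTwoSided := Ideal.isTwoSided_of_star_mem fun _ ⟨a, ha⟩ => ⟨star a, by
    simpa [hstar] using congrArg star ha⟩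
  exact ⟨I.toTwoSided, I.coe_toTwoSided⟩
end

section
/- Let L be a transfer operator for (A, α). Then the following are equivalent: (i) the composition E = α ∘ L is a conditional expectation from A onto α(A) (i.e. E is a positive idempotent map onto α(A) satisfying E(α(a) x α(b)) = α(a) E(x) α(b)); (ii) α ∘ L ∘ α = α; (iii) α(L(1)) = α(1). -/
open ComplexStarModule

section aux

variable {A : Type*} [NormedRing A] [StarRing A] [CStarRing A] [NormedAlgebra ℂ A]
    [CompleteSpace A] [StarModule ℂ A] [PartialOrder A] [StarOrderedRing A]

/-- A star algebra hom between C*-algebras is positive. -/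
lemma starAlgHom_nonneg (α : A →⋆ₐ[ℂ] A) {a : A} (ha : 0 ≤ a) : 0 ≤ α a := by
  letI : CStarAlgebra A :=
    { ‹NormedRing A›, ‹StarRing A›, ‹CStarRing A›, ‹NormedAlgebra ℂ A›,
      ‹StarModule ℂ A›, ‹CompleteSpace A› with }
  have h : a = star (CFC.sqrt a) * CFC.sqrt a := by
    rw [(IsSelfAdjoint.of_nonneg (CFC.sqrt_nonneg (a := a))).star_eq, CFC.sqrt_mul_sqrt_self a ha]
  rw [h, map_mul, map_star]
  exact star_mul_self_nonneg _

/-- A positive linear map on a C*-algebra is star-preserving. -/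
lemma positive_map_star (L : A →L[ℂ] A) (hpos : ∀ a : A, 0 ≤ a → 0 ≤ L a) (x : A) :
    L (star x) = star (L x) := by
  letI : CStarAlgebra A :=
    { ‹NormedRing A›, ‹StarRing A›, ‹CStarRing A›, ‹NormedAlgebra ℂ A›,
      ‹StarModule ℂ A›, ‹CompleteSpace A› with }
  have hsa : ∀ h : A, IsSelfAdjoint h → IsSelfAdjoint (L h) := by
    intro h hh
    have hd : h = h⁺ - h⁻ := (CFC.posPart_sub_negPart h hh).symm
    rw [hd, map_sub]
    exact ((IsSelfAdjoint.of_nonneg (hpos _ (CFC.posPart_nonneg h))).sub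
      (IsSelfAdjoint.of_nonneg (hpos _ (CFC.negPart_nonneg h))))
  obtain ⟨h, hh, k, hk, hx⟩ : ∃ h, IsSelfAdjoint h ∧ ∃ k, IsSelfAdjoint k ∧
      x = h + Complex.I • k :=
    ⟨_, (ℜ x).2, _, (ℑ x).2, (realPart_add_I_smul_imaginaryPart x).symm⟩
  have hsx : star x = h - Complex.I • k := by
    rw [hx, star_add, star_smul, hh.star_eq, hk.star_eq]
    simp [Complex.conj_I, sub_eq_add_neg]
  rw [hsx, hx, map_sub, map_add, map_smul, star_add, star_smul,
    (hsa _ hh).star_eq, (hsa _ hk).star_eq]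
  simp [Complex.conj_I, sub_eq_add_neg]

end aux

/-- For a transfer operator L for (A, α) the following are
equivalent: (i) E = α ∘ L is a conditional expectation from A onto α(A);
(ii) α ∘ L ∘ α = α; (iii) α(L(1)) = α(1). -/
theorem transfer_operator_nondegenerate_tfae
    {A : Type*} [NormedRing A] [StarRing A] [CStarRing A] [NormedAlgebra ℂ A]
    [CompleteSpace A] [StarModule ℂ A] [PartialOrder A] [StarOrderedRing A]
    (α : A →⋆ₐ[ℂ] A) (L : A →L[ℂ] A)
    (hpos : ∀ a : A, 0 ≤ a → 0 ≤ L a)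
    (htr : ∀ a b : A, L (α a * b) = a * L b) :
    List.TFAE
      [ -- (i) E = α ∘ L is a conditional expectation from A onto α(A)
        (∀ a : A, 0 ≤ a → 0 ≤ α (L a)) ∧
        (∀ a : A, α (L (α (L a))) = α (L a)) ∧
        Set.range (fun a => α (L a)) = Set.range α ∧
        (∀ a b x : A, α (L (α a * x * α b)) = α a * α (L x) * α b),
        -- (ii) α ∘ L ∘ α = α
        (∀ a : A, α (L (α a)) = α a),
        -- (iii) α(L(1)) = α(1)
        α (L 1) = α 1 ] := by
  have hstar : ∀ x : A, L (star x) = star (L x) := positive_map_star L hpos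
  have hR : ∀ x b : A, L (x * α b) = L x * b := by
    intro x b
    calc L (x * α b) = star (L (star (x * α b))) := by rw [hstar, star_star]
      _ = star (L (α (star b) * star x)) := by simp only [star_mul, map_star]
      _ = star (star b * L (star x)) := by rw [htr]
      _ = L x * b := by rw [star_mul, hstar, star_star, star_star]
  have hii_of_hiii : α (L 1) = α 1 → ∀ a : A, α (L (α a)) = α a := by
    intro h3 a
    have : L (α a) = a * L 1 := by simpa using htr a 1
    rw [this, map_mul, h3, map_one, mul_one]
  tfae_have 1 → 2 := by
    rintro ⟨_, hidem, hrange, _⟩ a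
    have : α a ∈ Set.range (fun a => α (L a)) := hrange ▸ ⟨a, rfl⟩
    obtain ⟨c, hc⟩ := this
    rw [← hc, hidem]
  tfae_have 2 → 3 := fun h2 => by simpa using h2 1
  tfae_have 3 → 1 := by
    intro h3
    have h2 := hii_of_hiii h3
    refine ⟨fun a ha => starAlgHom_nonneg α (hpos a ha), fun a => h2 (L a), ?_, ?_⟩
    · ext x
      constructor
      · rintro ⟨c, hc⟩; exact ⟨L c, hc⟩
      · rintro ⟨c, hc⟩; exact ⟨α c, by simpa [h2 c] using hc⟩
    · intro a b x
      rw [mul_assoc, htr, hR, map_mul, map_mul, ← mul_assoc]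
  tfae_finish
end

section
/- A transfer operator L for (A, α) is non-degenerate (i.e. α ∘ L ∘ α = α) if and only if the restriction of E = α ∘ L to the corner α(1) A α(1) is a conditional expectation from α(1) A α(1) onto α(A). -/
/-!
A positive ℂ-linear map on a C⋆-algebra is `*`-preserving, so the left module identity
`L (α a * b) = a * L b` of a transfer operator has a right-handed twin `L (b * α a) = L b * a`.
Together they make `E = α ∘ L` an `α(A)`-bimodule map on the corner `α(1) A α(1)`, positive because
`α` is. Non-degeneracy `E ∘ α = α` then says that `E` fixes `α(A)`, which gives both idempotence
and that `E` maps the corner (which contains `α(A)`) onto `α(A)`. Conversely, if `E` is idempotent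
on the corner with image `α(A)`, every `α a` is some `E x`, so `E (α a) = E (E x) = E x = α a`.
-/

section TransferOperator

variable {A : Type*} [CStarAlgebra A] [PartialOrder A] [StarOrderedRing A]

theorem map_star_of_map_nonneg (L : A →ₗ[ℂ] A) (hpos : ∀ a : A, 0 ≤ a → 0 ≤ L a) (a : A) :
    L (star a) = star (L a) :=
  map_star (PositiveLinearMap.mk₀ L hpos) a

theorem transfer_map_mul_right (α : A →⋆ₐ[ℂ] A) (L : A →ₗ[ℂ] A)
    (hpos : ∀ a : A, 0 ≤ a → 0 ≤ L a) (htr : ∀ a b : A, L (α a * b) = a * L b) (a b : A) :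
    L (b * α a) = L b * a := by
  have hstar := map_star_of_map_nonneg L hpos
  calc L (b * α a) = star (L (α (star a) * star b)) := by
        rw [← hstar, star_mul, star_star, map_star, star_star]
    _ = L b * a := by rw [htr, star_mul, star_star, hstar, star_star]

theorem transfer_comp_map_mul_mul (α : A →⋆ₐ[ℂ] A) (L : A →ₗ[ℂ] A)
    (hpos : ∀ a : A, 0 ≤ a → 0 ≤ L a) (htr : ∀ a b : A, L (α a * b) = a * L b) (a b x : A) :
    α (L (α a * x * α b)) = α a * α (L x) * α b := by
  rw [mul_assoc, htr, transfer_map_mul_right α L hpos htr, map_mul, map_mul, mul_assoc]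

end TransferOperator

theorem map_one_mul_map_mul_map_one {M F : Type*} [MulOneClass M] [FunLike F M M]
    [MulHomClass F M M] (α : F) (a : M) : α 1 * α a * α 1 = α a := by
  rw [← map_mul, ← map_mul, one_mul, mul_one]

theorem image_comp_eq_range_of_comp_map {M F : Type*} [MulOneClass M] [FunLike F M M]
    [MulHomClass F M M] (α : F) (L : M → M) (hnd : ∀ a : M, α (L (α a)) = α a) :
    (fun x => α (L x)) '' {x : M | α 1 * x * α 1 = x} = Set.range α := by
  refine subset_antisymm (Set.image_subset_iff.2 fun x _ => ⟨L x, rfl⟩) ?_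
  rintro _ ⟨a, rfl⟩
  exact ⟨α a, map_one_mul_map_mul_map_one α a, hnd a⟩

theorem comp_map_eq_of_image_eq_range {M N : Type*} (α : M → N) (L : N → M) (S : Set N)
    (himg : (fun x => α (L x)) '' S = Set.range α)
    (hidem : ∀ x : N, x ∈ S → α (L (α (L x))) = α (L x)) (a : M) :
    α (L (α a)) = α a := by
  obtain ⟨x, hx, hxa⟩ : α a ∈ (fun x => α (L x)) '' S := himg ▸ Set.mem_range_self a
  rw [← hxa]
  exact hidem x hx

/-- A transfer operator L for (A, α) is non-degenerate (α∘L∘α = α)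
iff E = α ∘ L restricted to the corner α(1)Aα(1) is a conditional expectation
from α(1)Aα(1) onto α(A). -/
theorem transfer_operator_nondegenerate_iff_corner_expectation
    {A : Type*} [NormedRing A] [StarRing A] [CStarRing A] [NormedAlgebra ℂ A]
    [CompleteSpace A] [StarModule ℂ A] [PartialOrder A] [StarOrderedRing A]
    (α : A →⋆ₐ[ℂ] A) (L : A →L[ℂ] A)
    (hpos : ∀ a : A, 0 ≤ a → 0 ≤ L a)
    (htr : ∀ a b : A, L (α a * b) = a * L b) :
    (∀ a : A, α (L (α a)) = α a) ↔
      ((∀ x : A, α 1 * x * α 1 = x → 0 ≤ x → 0 ≤ α (L x)) ∧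
       (fun x => α (L x)) '' {x : A | α 1 * x * α 1 = x} = Set.range α ∧
       (∀ x : A, α 1 * x * α 1 = x → α (L (α (L x))) = α (L x)) ∧
       (∀ a b x : A, α 1 * x * α 1 = x →
          α (L (α a * x * α b)) = α a * α (L x) * α b)) := by
  let _ : CStarAlgebra A := { }
  constructor
  · intro hnd
    exact ⟨fun x _ hx => map_nonneg α (hpos x hx), image_comp_eq_range_of_comp_map α L hnd,
      fun x _ => hnd (L x),
      fun a b x _ => transfer_comp_map_mul_mul α (L : A →ₗ[ℂ] A) hpos htr a b x⟩
  · rintro ⟨-, himg, hidem, -⟩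
    exact comp_map_eq_of_image_eq_range α L _ himg hidem
end

section
/- If there exists a non-degenerate transfer operator L for (A, α), then L(1) is a central projection of A, 1 − L(1) is a unit for the ideal ker α, and A decomposes as the direct sum A = ker α ⊕ (ker α)⊥, where (ker α)⊥ = { a ∈ A : a·ker α = 0 } is the annihilator of ker α. -/
open scoped ComplexStarModule

/-- A positive linear map on a C*-algebra is star-preserving. -/
lemma transfer_map_star_aux
    {A : Type*} [NormedRing A] [StarRing A] [CStarRing A] [NormedAlgebra ℂ A]
    [CompleteSpace A] [StarModule ℂ A] [PartialOrder A] [StarOrderedRing A]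
    (L : A →L[ℂ] A) (hpos : ∀ a : A, 0 ≤ a → 0 ≤ L a) (x : A) :
    star (L x) = L (star x) := by
  letI : CStarAlgebra A := { }
  have hsa : ∀ y : A, 0 ≤ y → star (L y) = L y := fun y hy =>
    (IsSelfAdjoint.of_nonneg (hpos y hy)).star_eq
  have h := CStarAlgebra.linear_combination_nonneg x
  set p1 := ((ℜ x : A))⁺ with hp1
  set p2 := ((ℜ x : A))⁻ with hp2
  set p3 := ((ℑ x : A))⁺ with hp3
  set p4 := ((ℑ x : A))⁻ with hp4
  have h1 : star (L p1) = L p1 := hsa _ (CFC.posPart_nonneg _)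
  have h2 : star (L p2) = L p2 := hsa _ (CFC.negPart_nonneg _)
  have h3 : star (L p3) = L p3 := hsa _ (CFC.posPart_nonneg _)
  have h4 : star (L p4) = L p4 := hsa _ (CFC.negPart_nonneg _)
  have s1 : star p1 = p1 := (IsSelfAdjoint.of_nonneg (CFC.posPart_nonneg _))
  have s2 : star p2 = p2 := (IsSelfAdjoint.of_nonneg (CFC.negPart_nonneg _))
  have s3 : star p3 = p3 := (IsSelfAdjoint.of_nonneg (CFC.posPart_nonneg _))
  have s4 : star p4 = p4 := (IsSelfAdjoint.of_nonneg (CFC.negPart_nonneg _))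
  rw [← h]
  simp only [star_add, star_sub, star_smul, map_add, map_sub, map_smul,
    Complex.star_def, Complex.conj_I, h1, h2, h3, h4, s1, s2, s3, s4,
    neg_smul, map_neg]

/-- If there exists a non-degenerate transfer operator L for (A, α),
then L(1) is a central projection, 1 - L(1) is a unit for ker α, and
A = ker α ⊕ (ker α)⊥. -/
theorem nondegenerate_transfer_kernel_decomposition
    {A : Type*} [NormedRing A] [StarRing A] [CStarRing A] [NormedAlgebra ℂ A]
    [CompleteSpace A] [StarModule ℂ A] [PartialOrder A] [StarOrderedRing A]
    (α : A →⋆ₐ[ℂ] A) (L : A →L[ℂ] A)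
    (hpos : ∀ a : A, 0 ≤ a → 0 ≤ L a)
    (htr : ∀ a b : A, L (α a * b) = a * L b)
    (hnd : ∀ a : A, α (L (α a)) = α a) :
    -- L(1) is a central projection
    (L 1 * L 1 = L 1 ∧ star (L 1) = L 1 ∧ ∀ a : A, a * L 1 = L 1 * a) ∧
    -- 1 - L(1) is a unit for the ideal ker α
    (∀ k : A, α k = 0 → (1 - L 1) * k = k ∧ k * (1 - L 1) = k) ∧
    -- A = ker α ⊕ (ker α)⊥ : existence and uniqueness of the decomposition
    (∀ a : A, ∃ b c : A, α b = 0 ∧ (∀ k : A, α k = 0 → c * k = 0) ∧ a = b + c) ∧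
    (∀ a : A, α a = 0 → (∀ k : A, α k = 0 → a * k = 0) → a = 0) := by
  have hstar : ∀ x : A, star (L x) = L (star x) := transfer_map_star_aux L hpos
  -- α (L 1) = 1
  have hE1 : α (L 1) = 1 := by
    have := hnd 1
    rwa [map_one α] at this
  -- idempotent
  have hidem : L 1 * L 1 = L 1 := by
    have := htr (L 1) 1
    rw [hE1, one_mul] at this
    exact this.symm
  -- self-adjoint
  have hsa : star (L 1) = L 1 := by
    have h1 : (0 : A) ≤ 1 := by simp
    exact (IsSelfAdjoint.of_nonneg (hpos 1 h1))
  -- right module property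
  have hR : ∀ a b : A, L (b * α a) = L b * a := by
    intro a b
    have h := htr (star a) (star b)
    have h' := congrArg star h
    simp only [star_mul, star_star, hstar, map_star] at h'
    simpa [star_mul, star_star, map_star] using h'
  -- centrality
  have hcen : ∀ a : A, a * L 1 = L 1 * a := by
    intro a
    have h1 := htr a 1
    have h2 := hR a 1
    rw [mul_one] at h1
    rw [one_mul] at h2
    rw [← h1, ← h2]
  -- kernel annihilation
  have hkE : ∀ k : A, α k = 0 → k * L 1 = 0 := by
    intro k hk
    have := htr k 1
    rw [hk, zero_mul, map_zero] at this
    exact this.symm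
  have hEk : ∀ k : A, α k = 0 → L 1 * k = 0 := by
    intro k hk
    rw [← hcen k]
    exact hkE k hk
  refine ⟨⟨hidem, hsa, hcen⟩, ?_, ?_, ?_⟩
  · intro k hk
    constructor
    · rw [sub_mul, one_mul, hEk k hk, sub_zero]
    · rw [mul_sub, mul_one, hkE k hk, sub_zero]
  · intro a
    refine ⟨a - a * L 1, a * L 1, ?_, ?_, by abel⟩
    · have : α (a * L 1) = α a := by rw [map_mul, hE1, mul_one]
      rw [map_sub, this, sub_self]
    · intro k hk
      rw [mul_assoc, hEk k hk, mul_zero]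
  · intro a ha h
    have hstar_a : α (star a) = 0 := by rw [map_star, ha, star_zero]
    have h0 : a * star a = 0 := h (star a) hstar_a
    have hnorm : ‖a‖ * ‖a‖ = 0 := by
      rw [← CStarRing.norm_self_mul_star, h0, norm_zero]
    exact norm_eq_zero.mp (mul_self_eq_zero.mp hnorm)
end

section
/- If L is a non-degenerate transfer operator for (A, α), then L(A) = (ker α)⊥ and the restriction L : α(A) → L(A) is a *-isomorphism, namely the inverse of the *-isomorphism α : (ker α)⊥ → α(A). In particular a non-degenerate transfer operator is uniquely determined on α(A) by α. -/
open Complex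
open scoped ComplexStarModule

private lemma transfer_star_map
    {A : Type*} [NormedRing A] [StarRing A] [CStarRing A] [NormedAlgebra ℂ A]
    [CompleteSpace A] [StarModule ℂ A] [PartialOrder A] [StarOrderedRing A]
    (L : A →L[ℂ] A) (hpos : ∀ a : A, 0 ≤ a → 0 ≤ L a) (a : A) :
    L (star a) = star (L a) := by
  letI : CStarAlgebra A := ⟨⟩
  have key := CStarAlgebra.linear_combination_nonneg a
  set p1 := (ℜ a : A)⁺ with hp1
  set p2 := (ℜ a : A)⁻ with hp2
  set p3 := (ℑ a : A)⁺ with hp3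
  set p4 := (ℑ a : A)⁻ with hp4
  have h1 : star p1 = p1 := (IsSelfAdjoint.of_nonneg (CFC.posPart_nonneg _)).star_eq
  have h2 : star p2 = p2 := (IsSelfAdjoint.of_nonneg (CFC.negPart_nonneg _)).star_eq
  have h3 : star p3 = p3 := (IsSelfAdjoint.of_nonneg (CFC.posPart_nonneg _)).star_eq
  have h4 : star p4 = p4 := (IsSelfAdjoint.of_nonneg (CFC.negPart_nonneg _)).star_eq
  have L1 : star (L p1) = L p1 := (IsSelfAdjoint.of_nonneg (hpos _ (CFC.posPart_nonneg _))).star_eq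
  have L2 : star (L p2) = L p2 := (IsSelfAdjoint.of_nonneg (hpos _ (CFC.negPart_nonneg _))).star_eq
  have L3 : star (L p3) = L p3 := (IsSelfAdjoint.of_nonneg (hpos _ (CFC.posPart_nonneg _))).star_eq
  have L4 : star (L p4) = L p4 := (IsSelfAdjoint.of_nonneg (hpos _ (CFC.negPart_nonneg _))).star_eq
  have ha : a = (p1 - p2) + (I • p3 - I • p4) := key.symm
  have hIs : (starRingEnd ℂ) I = -I := by simp
  rw [ha]
  simp only [star_add, star_sub, star_smul, h1, h2, h3, h4, hIs, map_add, map_sub, map_smul,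
    L1, L2, L3, L4, neg_smul]



/-- If L is a non-degenerate transfer operator for (A, α), then
L(A) = (ker α)⊥ and L restricted to α(A) is the inverse of the *-isomorphism
α : (ker α)⊥ → α(A); in particular L is uniquely determined on α(A) by α. -/
theorem nondegenerate_transfer_range_and_inverse
    {A : Type*} [NormedRing A] [StarRing A] [CStarRing A] [NormedAlgebra ℂ A]
    [CompleteSpace A] [StarModule ℂ A] [PartialOrder A] [StarOrderedRing A]
    (α : A →⋆ₐ[ℂ] A) (L : A →L[ℂ] A)
    (hpos : ∀ a : A, 0 ≤ a → 0 ≤ L a)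
    (htr : ∀ a b : A, L (α a * b) = a * L b)
    (hnd : ∀ a : A, α (L (α a)) = α a) :
    -- L(A) = (ker α)⊥
    Set.range L = {a : A | ∀ k : A, α k = 0 → a * k = 0} ∧
    -- L is the inverse of α : (ker α)⊥ → α(A)
    (∀ a : A, (∀ k : A, α k = 0 → a * k = 0) → L (α a) = a) ∧
    -- uniqueness: any non-degenerate transfer operator agrees with L on α(A)
    (∀ L' : A →L[ℂ] A, (∀ a : A, 0 ≤ a → 0 ≤ L' a) →
      (∀ a b : A, L' (α a * b) = a * L' b) →
      (∀ a : A, α (L' (α a)) = α a) →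
      ∀ a : A, L' (α a) = L (α a)) := by
  -- general facts, stated for an arbitrary transfer operator
  have key : ∀ (M : A →L[ℂ] A), (∀ a : A, 0 ≤ a → 0 ≤ M a) →
      (∀ a b : A, M (α a * b) = a * M b) →
      (∀ a : A, α (M (α a)) = α a) →
      (∀ a : A, M (α a) = a * M 1) ∧ α (M 1) = 1 ∧
      (∀ a k : A, α k = 0 → M a * k = 0) ∧
      (∀ a : A, (∀ k : A, α k = 0 → a * k = 0) → M (α a) = a) := by
    intro M hpos htr hnd
    have hstar : ∀ a : A, M (star a) = star (M a) := transfer_star_map M hpos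
    have h1 : ∀ a : A, M (α a) = a * M 1 := by
      intro a
      have := htr a 1
      rwa [mul_one] at this
    have hMr : ∀ a b : A, M (b * α a) = M b * a := by
      intro a b
      have h := htr (star a) (star b)
      calc M (b * α a) = star (M (star (b * α a))) := by rw [hstar]; simp
        _ = star (M (α (star a) * star b)) := by rw [star_mul, map_star]
        _ = star (star a * M (star b)) := by rw [h]
        _ = star (M (star b)) * a := by rw [star_mul, star_star]
        _ = M b * a := by rw [← hstar, star_star]
    have hαe : α (M 1) = 1 := by
      have := hnd 1
      rwa [map_one] at this
    have hann : ∀ a k : A, α k = 0 → M a * k = 0 := by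
      intro a k hk
      have := hMr k a
      rw [hk, mul_zero, map_zero] at this
      exact this.symm
    refine ⟨h1, hαe, hann, ?_⟩
    -- the inverse property
    intro a ha
    set e := M 1 with he
    have hec : ∀ x : A, x * e = e * x := by
      intro x
      have h2 := hMr x 1
      rw [one_mul] at h2
      rw [← h1 x, h2]
    have hestar : star e = e :=
      (IsSelfAdjoint.of_nonneg (hpos 1 zero_le_one)).star_eq
    have he2 : e * e = e := by
      have h := h1 e
      rw [hαe] at h
      exact h.symm.trans he.symm
    set k := a * e - a with hkdef
    have hkker : α k = 0 := by
      rw [hkdef, map_sub, map_mul, hαe, mul_one, sub_self]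
    have hkstar : α (star k) = 0 := by
      rw [map_star, hkker, star_zero]
    have hak : a * star k = 0 := ha _ hkstar
    have hstar_k : star k = e * star a - star a := by
      rw [hkdef, star_sub, star_mul, hestar]
    have haes : a * (e * star a) = a * star a := by
      have : a * (e * star a - star a) = 0 := by rw [← hstar_k]; exact hak
      rw [mul_sub, sub_eq_zero] at this
      exact this
    have hkk : k * star k = 0 := by
      have t1 : a * e * (e * star a) = a * star a := by
        rw [mul_assoc a e, ← mul_assoc e e, he2, haes]
      have t2 : a * e * star a = a * star a := by
        rw [mul_assoc, haes]
      rw [hkdef, hstar_k, sub_mul, mul_sub, mul_sub, t1, t2, haes]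
      abel
    have hk0 : k = 0 := (CStarRing.mul_star_self_eq_zero_iff k).mp hkk
    have : a * e = a := by
      have := sub_eq_zero.mp hk0
      exact this
    rw [h1, this]
  obtain ⟨h1, hαe, hann, hinv⟩ := key L hpos htr hnd
  refine ⟨?_, hinv, ?_⟩
  · ext a
    constructor
    · rintro ⟨b, rfl⟩ k hk
      exact hann b k hk
    · intro ha
      exact ⟨α a, hinv a ha⟩
  · intro L' hpos' htr' hnd' a
    obtain ⟨h1', hαe', hann', hinv'⟩ := key L' hpos' htr' hnd'
    -- show L' 1 = L 1
    have hker : α (L 1 - 1) = 0 := by rw [map_sub, hαe, map_one, sub_self]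
    have hker' : α (L' 1 - 1) = 0 := by rw [map_sub, hαe', map_one, sub_self]
    have h5 : L' 1 * (L 1 - 1) = 0 := hann' 1 _ hker
    have h6 : L 1 * (L' 1 - 1) = 0 := hann 1 _ hker'
    rw [mul_sub, mul_one, sub_eq_zero] at h5 h6
    -- centrality of L 1
    have hec : L' 1 * L 1 = L 1 * L' 1 := by
      have ha := htr (L' 1) 1
      have hb := (by
        have h := htr (star (L' 1)) (star 1)
        calc L (1 * α (L' 1)) = star (L (star (1 * α (L' 1)))) := by
              rw [transfer_star_map L hpos]; simp
          _ = star (L (α (star (L' 1)) * star 1)) := by rw [star_mul, map_star]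
          _ = star (star (L' 1) * L (star 1)) := by rw [h]
          _ = star (L (star 1)) * L' 1 := by rw [star_mul, star_star]
          _ = L 1 * L' 1 := by rw [← transfer_star_map L hpos, star_star] : L (1 * α (L' 1)) = L 1 * L' 1)
      rw [mul_one] at ha
      rw [one_mul] at hb
      rw [← ha, ← hb]
    have : L' 1 = L 1 := by rw [← h5, hec, h6]
    rw [h1, h1', this]
end

section
/- Suppose α : A → A is a *-endomorphism whose kernel is a unital ideal and whose range α(A) is a hereditary subalgebra of A (equivalently α(A) = α(1) A α(1)). Then there exists exactly one non-degenerate transfer operator L for (A, α); it is given by L(a) = α⁻¹(α(1) a α(1)), where α⁻¹ is the inverse of the isomorphism α : (ker α)⊥ → α(A), and it satisfies α(L(a)) = α(1) a α(1) for all a ∈ A. -/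
set_option linter.unusedSectionVars false
set_option maxHeartbeats 1000000

section Aux

variable {A : Type*} [NormedRing A] [StarRing A] [CStarRing A] [NormedAlgebra ℂ A]
    [CompleteSpace A] [StarModule ℂ A]

lemma aux_sq_zero (t : A) (ht : star t = t) (h : t * t = 0) : t = 0 := by
  have h1 : ‖t‖ * ‖t‖ = 0 := by
    rw [← CStarRing.norm_star_mul_self (x := t), ht, h, norm_zero]
  have h2 : ‖t‖ = 0 := by nlinarith [norm_nonneg t]
  exact norm_eq_zero.mp h2

lemma aux_cube_zero (t : A) (ht : star t = t) (h : t * t * t = 0) : t = 0 := by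
  have hsq : (t * t) * (t * t) = 0 := by rw [← mul_assoc, h, zero_mul]
  have hst : star (t * t) = t * t := by rw [star_mul, ht]
  exact aux_sq_zero t ht (aux_sq_zero (t * t) hst hsq)

def corner (p : A) (hp : star p = p) : NonUnitalStarSubalgebra ℂ A where
  carrier := {x | p * x = x ∧ x * p = x}
  add_mem' := by
    rintro x y ⟨h1, h2⟩ ⟨h3, h4⟩
    exact ⟨by rw [mul_add, h1, h3], by rw [add_mul, h2, h4]⟩
  zero_mem' := by simp
  mul_mem' := by
    rintro x y ⟨h1, h2⟩ ⟨h3, h4⟩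
    exact ⟨by rw [← mul_assoc, h1], by rw [mul_assoc, h4]⟩
  smul_mem' := by
    rintro c x ⟨h1, h2⟩
    exact ⟨by rw [mul_smul_comm, h1], by rw [smul_mul_assoc, h2]⟩
  star_mem' := by
    rintro x ⟨h1, h2⟩
    constructor
    · rw [← hp, ← star_mul, h2]
    · rw [← hp, ← star_mul, h1]

lemma corner_isClosed (p : A) (hp : star p = p) : IsClosed ((corner p hp : Set A)) := by
  have : (corner p hp : Set A) = {x | p * x = x} ∩ {x | x * p = x} := rfl
  rw [this]
  exact (isClosed_eq (continuous_const.mul continuous_id) continuous_id).inter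
    (isClosed_eq (continuous_id.mul continuous_const) continuous_id)

lemma corner_isometry (α : A →⋆ₐ[ℂ] A) (p : A) (hp : star p = p)
    (hinj : ∀ x ∈ corner p hp, α x = 0 → x = 0) :
    ∀ x ∈ corner p hp, ‖α x‖ = ‖x‖ := by
  letI : CStarAlgebra A :=
    { ‹NormedRing A›, ‹StarRing A›, ‹CStarRing A›, ‹CompleteSpace A›,
      ‹NormedAlgebra ℂ A›, ‹StarModule ℂ A› with }
  haveI : IsClosed ((corner p hp : Set A)) := corner_isClosed p hp
  let φ : corner p hp →⋆ₙₐ[ℂ] A :=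
    α.toNonUnitalStarAlgHom.comp (NonUnitalStarSubalgebraClass.subtype _)
  have hφ : Function.Injective φ := by
    intro x y hxy
    have h0 : α ((x : A) - (y : A)) = 0 := by
      rw [map_sub, sub_eq_zero]
      exact hxy
    have := hinj _ (sub_mem x.2 y.2) h0
    exact Subtype.ext (sub_eq_zero.mp this)
  intro x hx
  exact NonUnitalStarAlgHom.norm_map φ hφ ⟨x, hx⟩

end Aux

/-- If α has unital kernel and hereditary range
(α(A) = α(1)Aα(1)), then there is exactly one non-degenerate transfer operator
L for (A, α), and it satisfies α (L a) = α(1) a α(1). -/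
theorem complete_transfer_exists_unique
    {A : Type*} [NormedRing A] [StarRing A] [CStarRing A] [NormedAlgebra ℂ A]
    [CompleteSpace A] [StarModule ℂ A] [PartialOrder A] [StarOrderedRing A]
    (α : A →⋆ₐ[ℂ] A)
    (hker : ∃ e : A, α e = 0 ∧ ∀ k : A, α k = 0 → e * k = k ∧ k * e = k)
    (hher : ∀ a : A, ∃ b : A, α 1 * a * α 1 = α b) :
    (∃! L : A →L[ℂ] A, (∀ a : A, 0 ≤ a → 0 ≤ L a) ∧
        (∀ a b : A, L (α a * b) = a * L b) ∧ (∀ a : A, α (L (α a)) = α a)) ∧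
    (∀ L : A →L[ℂ] A, (∀ a : A, 0 ≤ a → 0 ≤ L a) →
        (∀ a b : A, L (α a * b) = a * L b) → (∀ a : A, α (L (α a)) = α a) →
        ∀ a : A, α (L a) = α 1 * a * α 1) := by
  classical
  letI : CStarAlgebra A :=
    { ‹NormedRing A›, ‹StarRing A›, ‹CStarRing A›, ‹CompleteSpace A›,
      ‹NormedAlgebra ℂ A›, ‹StarModule ℂ A› with }
  obtain ⟨e, he0, heu⟩ := hker
  have hestar : star e = e := by
    have h1 : e * star e = star e := (heu (star e) (by rw [map_star, he0, star_zero])).1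
    have h2 : e = star (e * star e) := by rw [h1, star_star]
    rw [star_mul, star_star, h1] at h2
    exact h2.symm
  have hee : e * e = e := (heu e he0).1
  choose w hw using hher
  set q : A := α 1 with hq_def
  set p : A := 1 - e with hp_def
  have hp_star : star p = p := by rw [hp_def, star_sub, star_one, hestar]
  have hpp : p * p = p := by
    rw [hp_def, sub_mul, one_mul, mul_sub, mul_one, hee, sub_self, sub_zero]
  have hαp : α p = q := by rw [hp_def, map_sub, he0, sub_zero, hq_def]
  have hkl : ∀ k, α k = 0 → p * k = 0 := by
    intro k hk
    rw [hp_def, sub_mul, one_mul, (heu k hk).1, sub_self]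
  have hkr : ∀ k, α k = 0 → k * p = 0 := by
    intro k hk
    rw [hp_def, mul_sub, mul_one, (heu k hk).2, sub_self]
  have hqq : q * q = q := by rw [hq_def, ← map_mul, one_mul]
  have hq_star : star q = q := by rw [hq_def, ← map_star, star_one]
  have hqαl : ∀ a, q * α a = α a := fun a => by rw [hq_def, ← map_mul, one_mul]
  have hqαr : ∀ a, α a * q = α a := fun a => by rw [hq_def, ← map_mul, mul_one]
  have hinj : ∀ x ∈ corner p hp_star, α x = 0 → x = 0 := by
    intro x hx h0
    rw [← hx.1]
    exact hkl x h0
  have key : ∀ x y, x ∈ corner p hp_star → y ∈ corner p hp_star → α x = α y → x = y := by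
    intro x y hx hy hxy
    have := hinj (x - y) (sub_mem hx hy) (by rw [map_sub, hxy, sub_self])
    exact sub_eq_zero.mp this
  have key0 : ∀ x y : A, α x = α y → p * x * p = p * y * p := by
    intro x y h
    have h0 : p * (x - y) = 0 := hkl _ (by rw [map_sub, h, sub_self])
    rw [mul_sub, sub_eq_zero] at h0
    rw [h0]
  have hqsand : ∀ x : A, q * (q * x * q) * q = q * x * q := by
    intro x
    calc q * (q * x * q) * q = (q * q) * x * (q * q) := by simp only [mul_assoc]
    _ = q * x * q := by rw [hqq]
  have hLmem : ∀ a : A, p * w a * p ∈ corner p hp_star := by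
    intro a
    constructor
    · show p * (p * w a * p) = p * w a * p
      rw [← mul_assoc, ← mul_assoc, hpp]
    · show (p * w a * p) * p = p * w a * p
      rw [mul_assoc, hpp]
  have hLα : ∀ a : A, α (p * w a * p) = q * a * q := by
    intro a
    rw [map_mul, map_mul, hαp, ← hw a, hqsand]
  -- linearity
  have hLadd : ∀ x y : A, p * w (x + y) * p = p * w x * p + p * w y * p := by
    intro x y
    have h1 : α (w (x + y)) = α (w x + w y) := by
      rw [map_add, ← hw, ← hw, ← hw, mul_add, add_mul]
    rw [key0 _ _ h1, mul_add, add_mul]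
  have hLsmul : ∀ (c : ℂ) (x : A), p * w (c • x) * p = c • (p * w x * p) := by
    intro c x
    have h1 : α (w (c • x)) = α (c • w x) := by
      rw [map_smul, ← hw, ← hw, mul_smul_comm, smul_mul_assoc]
    rw [key0 _ _ h1, mul_smul_comm, smul_mul_assoc]
  -- boundedness
  have hqnorm : ‖q‖ ≤ 1 := by
    have h := CStarRing.norm_star_mul_self (x := q)
    rw [hq_star, hqq] at h
    nlinarith [norm_nonneg q]
  have hbound : ∀ a : A, ‖p * w a * p‖ ≤ 1 * ‖a‖ := by
    intro a
    rw [← corner_isometry α p hp_star hinj _ (hLmem a), hLα]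
    calc ‖q * a * q‖ ≤ ‖q * a‖ * ‖q‖ := norm_mul_le _ _
      _ ≤ (‖q‖ * ‖a‖) * ‖q‖ :=
        mul_le_mul_of_nonneg_right (norm_mul_le _ _) (norm_nonneg _)
      _ ≤ 1 * ‖a‖ * 1 := by gcongr
      _ = 1 * ‖a‖ := by ring
  set L0 : A →ₗ[ℂ] A :=
    { toFun := fun a => p * w a * p
      map_add' := hLadd
      map_smul' := hLsmul } with hL0_def
  set L : A →L[ℂ] A := L0.mkContinuous 1 hbound with hL_def
  have hLapp : ∀ a : A, L a = p * w a * p := fun _ => rfl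
  have hLmem' : ∀ a : A, L a ∈ corner p hp_star := fun a => hLapp a ▸ hLmem a
  have hLα' : ∀ a : A, α (L a) = q * a * q := fun a => by rw [hLapp, hLα]
  -- positivity of α
  have hα_pos : ∀ a : A, 0 ≤ a → 0 ≤ α a := by
    intro a ha
    rw [StarOrderedRing.nonneg_iff] at ha ⊢
    refine AddSubmonoid.closure_induction ?_ ?_ ?_ ha
    · rintro x ⟨s, rfl⟩
      exact AddSubmonoid.subset_closure ⟨α s, by rw [map_mul, map_star]⟩
    · rw [map_zero]; exact zero_mem _
    · intro x y hx hy ihx ihy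
      rw [map_add]; exact add_mem ihx ihy
  -- positivity of L
  have hLpos : ∀ a : A, 0 ≤ a → 0 ≤ L a := by
    intro a ha
    rw [StarOrderedRing.nonneg_iff] at ha
    refine AddSubmonoid.closure_induction ?_ ?_ ?_ ha
    · rintro x ⟨c, rfl⟩
      set x := L (star c * c) with hx_def
      have hxmem : x ∈ corner p hp_star := hLmem' _
      have hαx : α x = star (c * q) * (c * q) := by
        rw [hx_def, hLα', star_mul, hq_star]
        simp only [mul_assoc]
      have hx_sa : IsSelfAdjoint x := by
        have h1 : α (star x) = α x := by
          rw [map_star, hαx, star_mul, star_star]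
        exact key _ _ (star_mem hxmem) hxmem h1
      have hneg_sa : IsSelfAdjoint (x⁻) := IsSelfAdjoint.of_nonneg (CFC.negPart_nonneg x)
      have hxx : x⁺ - x⁻ = x := CFC.posPart_sub_negPart x hx_sa
      have hαneg_sa : star (α x⁻) = α x⁻ := by rw [← map_star, hneg_sa.star_eq]
      have hcube : α x⁻ * α x⁻ * α x⁻ = 0 := by
        have h1 : x⁻ * x * x⁻ = -(x⁻ * x⁻ * x⁻) := by
          have h0 : x⁻ * (x⁺ - x⁻) * x⁻ = x⁻ * x * x⁻ := by rw [hxx]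
          rw [mul_sub, CFC.negPart_mul_posPart, zero_sub, neg_mul] at h0
          exact h0.symm
        have h2 : 0 ≤ α (x⁻ * x * x⁻) := by
          rw [map_mul, map_mul, hαx]
          have h3 := star_left_conjugate_nonneg (star_mul_self_nonneg (c * q)) (α x⁻)
          rwa [hαneg_sa] at h3
        have h4 : 0 ≤ α x⁻ * α x⁻ * α x⁻ := by
          have h5 := star_left_conjugate_nonneg (hα_pos _ (CFC.negPart_nonneg x)) (α x⁻)
          rwa [hαneg_sa] at h5
        have h6 : α (x⁻ * x * x⁻) = -(α x⁻ * α x⁻ * α x⁻) := by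
          rw [h1, map_neg, map_mul, map_mul]
        rw [h6] at h2
        exact le_antisymm (neg_nonneg.mp h2) h4
      have hαneg : α x⁻ = 0 := aux_cube_zero _ hαneg_sa hcube
      have hpneg : p * x⁻ = 0 := hkl _ hαneg
      have hnn : x⁻ * x⁻ = 0 := by
        have h6 : x * x⁻ = -(x⁻ * x⁻) := by
          have h0 : (x⁺ - x⁻) * x⁻ = x * x⁻ := by rw [hxx]
          rw [sub_mul, CFC.posPart_mul_negPart, zero_sub] at h0
          exact h0.symm
        have h7 : x * x⁻ = 0 := by
          calc x * x⁻ = x * (p * x⁻) := by rw [← mul_assoc, hxmem.2]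
          _ = 0 := by rw [hpneg, mul_zero]
        rw [h7] at h6
        exact neg_eq_zero.mp h6.symm
      have hneg0 : x⁻ = 0 := aux_sq_zero _ hneg_sa.star_eq hnn
      rw [← hxx, hneg0, sub_zero]
      exact CFC.posPart_nonneg x
    · rw [map_zero]
    · intro x y hx hy ihx ihy
      rw [map_add]; exact add_nonneg ihx ihy
  -- corner absorbs left multiplication
  have habs : ∀ (a y : A), y ∈ corner p hp_star → a * y ∈ corner p hp_star := by
    intro a y hy
    have he_a : e * a * p = 0 := hkr (e * a) (by rw [map_mul, he0, zero_mul])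
    constructor
    · have h2 : e * a * (p * y) = 0 := by rw [← mul_assoc, he_a, zero_mul]
      rw [hy.1] at h2
      show p * (a * y) = a * y
      rw [hp_def, sub_mul, one_mul, ← mul_assoc, h2, sub_zero]
    · show (a * y) * p = a * y
      rw [mul_assoc, hy.2]
  -- transfer property
  have htrans : ∀ a c : A, L (α a * c) = a * L c := by
    intro a c
    refine key _ _ (hLmem' _) (habs a _ (hLmem' c)) ?_
    rw [hLα', map_mul, hLα']
    rw [show q * (α a * c) * q = (q * α a) * c * q by simp only [mul_assoc], hqαl]
    rw [show α a * (q * c * q) = (α a * q) * c * q by simp only [mul_assoc], hqαr]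
  have hnondeg : ∀ a : A, α (L (α a)) = α a := by
    intro a
    rw [hLα', hqαl, hqαr]
  -- arbitrary transfer operators are star preserving
  have hL'star : ∀ (L' : A →L[ℂ] A), (∀ a, 0 ≤ a → 0 ≤ L' a) →
      ∀ x, L' (star x) = star (L' x) := by
    intro L' hpos'
    have hsa : ∀ h : A, IsSelfAdjoint h → IsSelfAdjoint (L' h) := by
      intro h hh
      have h1 : L' h = L' h⁺ - L' h⁻ := by rw [← map_sub, CFC.posPart_sub_negPart h hh]
      exact h1 ▸ ((IsSelfAdjoint.of_nonneg (hpos' _ (CFC.posPart_nonneg h))).sub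
        (IsSelfAdjoint.of_nonneg (hpos' _ (CFC.negPart_nonneg h))))
    have hdecomp : ∀ x : A, ∃ h k : A, IsSelfAdjoint h ∧ IsSelfAdjoint k ∧
        x = h + Complex.I • k ∧ star x = h - Complex.I • k := by
      intro x
      have hh_sa : IsSelfAdjoint ((2⁻¹ : ℂ) • (x + star x)) := by
        show star ((2⁻¹ : ℂ) • (x + star x)) = (2⁻¹ : ℂ) • (x + star x)
        rw [star_smul, star_add, star_star, add_comm (star x) x]
        congr 1
        simp
      have hk_sa : IsSelfAdjoint ((-(Complex.I) * 2⁻¹) • (x - star x)) := by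
        show star ((-(Complex.I) * 2⁻¹) • (x - star x)) = (-(Complex.I) * 2⁻¹) • (x - star x)
        rw [star_smul, star_sub, star_star]
        rw [show star (-(Complex.I) * (2⁻¹ : ℂ)) = -(-(Complex.I) * (2⁻¹ : ℂ)) by
          simp [Complex.star_def]]
        rw [neg_smul, ← smul_neg, neg_sub]
      have hxhk : x = (2⁻¹ : ℂ) • (x + star x) + Complex.I • ((-(Complex.I) * 2⁻¹) • (x - star x)) := by
        rw [smul_smul,
          show Complex.I * (-(Complex.I) * 2⁻¹) = (2⁻¹ : ℂ) by
            rw [← mul_assoc, mul_neg, Complex.I_mul_I, neg_neg, one_mul]]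
        module
      refine ⟨_, _, hh_sa, hk_sa, hxhk, ?_⟩
      calc star x = star ((2⁻¹ : ℂ) • (x + star x) + Complex.I • ((-(Complex.I) * 2⁻¹) • (x - star x))) := by
            rw [← hxhk]
      _ = _ := by
            rw [star_add, hh_sa.star_eq, star_smul, hk_sa.star_eq,
              show star Complex.I = -Complex.I by simp [Complex.star_def],
              neg_smul, ← sub_eq_add_neg]
    intro x
    obtain ⟨h, k, hh_sa, hk_sa, hxhk, hstar_x⟩ := hdecomp x
    rw [hstar_x, map_sub, map_smul]
    conv_rhs => rw [hxhk]
    rw [map_add, map_smul, star_add, star_smul,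
      show star Complex.I = -Complex.I by simp [Complex.star_def],
      (hsa h hh_sa).star_eq, (hsa k hk_sa).star_eq, neg_smul, ← sub_eq_add_neg]
  -- right transfer property
  have hL'transR : ∀ (L' : A →L[ℂ] A), (∀ x, L' (star x) = star (L' x)) →
      (∀ a c, L' (α a * c) = a * L' c) → ∀ c a, L' (c * α a) = L' c * a := by
    intro L' hstar htr c a
    have h1 := hstar (α (star a) * star c)
    rw [htr, star_mul, star_star, ← map_star, star_star] at h1
    rw [h1, star_mul, star_star, hstar, star_star]
  -- the canonical form of any nondegenerate transfer operator
  have hL'form : ∀ (L' : A →L[ℂ] A), (∀ a c, L' (α a * c) = a * L' c) →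
      (∀ c a, L' (c * α a) = L' c * a) → (∀ a, α (L' (α a)) = α a) →
      ∀ a, α (L' a) = q * a * q := by
    intro L' htr htrR hnd a
    have h1 : L' a = L' (α (w a)) := by
      rw [← hw a]
      have h2 : q * a * q = α 1 * (a * α 1) := by
        rw [hq_def]; simp only [mul_assoc]
      rw [h2, htr, one_mul, htrR, mul_one]
    rw [h1, hnd, ← hw]
  have hL'corner : ∀ (L' : A →L[ℂ] A), (∀ a c, L' (α a * c) = a * L' c) →
      (∀ c a, L' (c * α a) = L' c * a) → ∀ a, L' a ∈ corner p hp_star := by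
    intro L' htr htrR a
    constructor
    · have h1 : e * L' a = 0 := by rw [← htr e a, he0, zero_mul, map_zero]
      rw [hp_def, sub_mul, one_mul, h1, sub_zero]
    · have h1 : L' a * e = 0 := by rw [← htrR a e, he0, mul_zero, map_zero]
      rw [hp_def, mul_sub, mul_one, h1, sub_zero]
  constructor
  · refine ⟨L, ⟨hLpos, htrans, hnondeg⟩, ?_⟩
    rintro L' ⟨hpos', htr', hnd'⟩
    have hst := hL'star L' hpos'
    have htrR' := hL'transR L' hst htr'
    have hform := hL'form L' htr' htrR' hnd'
    ext a
    refine key _ _ (hL'corner L' htr' htrR' a) (hLmem' a) ?_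
    rw [hform, hLα']
  · intro L' hpos' htr' hnd' a
    exact hL'form L' htr' (hL'transR L' (hL'star L' hpos') htr') hnd' a
end

section
/- Let E = α(1)A be the C*-correspondence over A with operations a·x = α(a)x, x·a = xa and right inner product ⟨x,y⟩_A = x* y. If L is a complete transfer operator for (A, α), then the formula ⟨x, y⟩^A := L(x y*) defines a left A-valued inner product making E into a Hilbert A-bimodule, i.e. it additionally satisfies the imprimitivity condition x·⟨y,z⟩_A = ⟨x,y⟩^A·z for all x, y, z ∈ E. -/
/-- Let E = α(1)A (elements x with α(1)x = x) be the
C*-correspondence of (A, α), with a·x = α(a)x, x·a = xa, ⟨x,y⟩_A = x*y.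
If L is a complete transfer operator for (A, α), then ⟨x,y⟩^A := L(x y*)
is a left A-valued inner product making E a Hilbert A-bimodule; in particular
the imprimitivity condition x·⟨y,z⟩_A = ⟨x,y⟩^A·z holds. -/
theorem complete_transfer_gives_hilbert_bimodule
    {A : Type*} [NormedRing A] [StarRing A] [CStarRing A] [NormedAlgebra ℂ A]
    [CompleteSpace A] [StarModule ℂ A] [PartialOrder A] [StarOrderedRing A]
    (α : A →⋆ₐ[ℂ] A) (L : A →L[ℂ] A)
    (hpos : ∀ a : A, 0 ≤ a → 0 ≤ L a)
    (htr : ∀ a b : A, L (α a * b) = a * L b)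
    (hnd : ∀ a : A, α (L (α a)) = α a)
    (hcomp : ∀ a : A, α (L a) = α 1 * a * α 1) :
    -- left A-linearity in the first variable:  ⟨a·x, y⟩^A = a ⟨x,y⟩^A
    (∀ a x y : A, α 1 * x = x → α 1 * y = y →
        L (α a * x * star y) = a * L (x * star y)) ∧
    -- hermitian symmetry:  (⟨x,y⟩^A)* = ⟨y,x⟩^A
    (∀ x y : A, α 1 * x = x → α 1 * y = y →
        star (L (x * star y)) = L (y * star x)) ∧
    -- positivity:  ⟨x,x⟩^A ≥ 0
    (∀ x : A, α 1 * x = x → 0 ≤ L (x * star x)) ∧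
    -- non-degeneracy:  ⟨x,x⟩^A = 0 → x = 0
    (∀ x : A, α 1 * x = x → L (x * star x) = 0 → x = 0) ∧
    -- imprimitivity condition:  x·⟨y,z⟩_A = ⟨x,y⟩^A·z
    (∀ x y z : A, α 1 * x = x → α 1 * y = y → α 1 * z = z →
        x * (star y * z) = α (L (x * star y)) * z) := by
  -- L (α 1) = L 1
  have hα1 : L (α 1) = L 1 := by
    have := htr 1 1
    simpa using this
  -- L (α a) = a * L 1
  have hLα : ∀ a : A, L (α a) = a * L 1 := by
    intro a
    have h1 : α a = α a * α 1 := by rw [← map_mul, mul_one]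
    rw [h1, htr, hα1]
  -- L 1 is selfadjoint
  have hone : (0 : A) ≤ 1 := by simpa using mul_star_self_nonneg (1 : A)
  have hp : star (L 1) = L 1 := IsSelfAdjoint.of_nonneg (hpos 1 hone)
  have hsa : star (α 1) = α 1 := by rw [← map_star, star_one]
  -- if α 1 * z = z and z * α 1 = z then α (L z) = z
  have hfix : ∀ z : A, α 1 * z = z → z * α 1 = z → α (L z) = z := by
    intro z h1 h2
    rw [hcomp, h1, h2]
  refine ⟨?_, ?_, ?_, ?_, ?_⟩
  · intro a x y _ _
    rw [mul_assoc, htr]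
  · -- hermitian symmetry
    intro x y hx hy
    set z := x * star y with hzdef
    have hz1 : α 1 * z = z := by rw [hzdef, ← mul_assoc, hx]
    have hz2 : z * α 1 = z := by
      have h : star y * α 1 = star y := by
        rw [← hsa, ← star_mul, hy]
      rw [hzdef, mul_assoc, h]
    have hz3 : α 1 * star z = star z := by
      rw [← hsa, ← star_mul, hz2]
    have hz4 : star z * α 1 = star z := by
      rw [← hsa, ← star_mul, hz1]
    have hu : α (L z) = z := hfix z hz1 hz2
    have hv : α (L (star z)) = star z := hfix (star z) hz3 hz4
    set u := L z with hudef
    set v := L (star z) with hvdef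
    -- u = star v * L 1
    have huv : u = star v * L 1 := by
      have : z = α (star v) := by rw [map_star, hv, star_star]
      rw [hudef, this, hLα]
    have hvu : v = star u * L 1 := by
      have : star z = α (star u) := by rw [map_star, hu]
      rw [hvdef, this, hLα]
    -- v * L 1 = v
    have hv1 : v * L 1 = v := by
      conv_lhs => rw [hvdef, ← hLα, hv]
    -- star u = L 1 * v
    have hsu : star u = L 1 * v := by
      rw [huv, star_mul, hp, star_star]
    have hgoal : y * star x = star z := by rw [hzdef, star_mul, star_star]
    rw [hgoal]
    show star u = v
    calc star u = L 1 * v := hsu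
      _ = L 1 * (v * L 1) := by rw [hv1]
      _ = (L 1 * v) * L 1 := by rw [mul_assoc]
      _ = star u * L 1 := by rw [← hsu]
      _ = v := hvu.symm
  · intro x _
    exact hpos _ (mul_star_self_nonneg x)
  · intro x hx h0
    have hz1 : α 1 * (x * star x) = x * star x := by rw [← mul_assoc, hx]
    have hz2 : (x * star x) * α 1 = x * star x := by
      have h : star x * α 1 = star x := by
        rw [← hsa, ← star_mul, hx]
      rw [mul_assoc, h]
    have : x * star x = 0 := by
      have := hfix (x * star x) hz1 hz2
      rw [h0, map_zero] at this
      exact this.symm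
    exact CStarRing.mul_star_self_eq_zero_iff x |>.mp this
  · intro x y z hx hy _
    have hz1 : α 1 * (x * star y) = x * star y := by rw [← mul_assoc, hx]
    have hz2 : (x * star y) * α 1 = x * star y := by
      have h : star y * α 1 = star y := by
        rw [← hsa, ← star_mul, hy]
      rw [mul_assoc, h]
    rw [hfix _ hz1 hz2, mul_assoc]
end

section
/- Let E = α(1)A be the C*-correspondence of (A, α). If there exists a left A-valued inner product ⟨·,·⟩^A making E (with its predefined left action a·x = α(a)x) into a Hilbert A-bimodule, then the map L(a) := ⟨α(1)a, α(1)⟩^A is a complete transfer operator for (A, α); in particular L satisfies L(α(b)a) = b L(a), α(L(a)) = α(1) a α(1), and L(a a*) ≥ 0 for all a, b ∈ A. -/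
/-- If the C*-correspondence E = α(1)A of (A, α) carries a left
A-valued inner product P = ⟨·,·⟩^A making it (with left action a·x = α(a)x)
a Hilbert A-bimodule, then L(a) := ⟨α(1)a, α(1)⟩^A is a complete transfer
operator for (A, α): L(α(b)a) = b L(a), α(L(a)) = α(1) a α(1), L(a a*) ≥ 0. -/
theorem hilbert_bimodule_gives_complete_transfer
    {A : Type*} [NormedRing A] [StarRing A] [CStarRing A] [NormedAlgebra ℂ A]
    [CompleteSpace A] [StarModule ℂ A] [PartialOrder A] [StarOrderedRing A]
    (α : A →⋆ₐ[ℂ] A) (P : A → A → A)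
    -- left A-linearity in the first variable:  ⟨a·x, y⟩^A = a ⟨x,y⟩^A
    (hlin : ∀ a x y : A, α 1 * x = x → α 1 * y = y →
        P (α a * x) y = a * P x y)
    -- additivity and ℂ-linearity in the first variable
    (hadd : ∀ x x' y : A, α 1 * x = x → α 1 * x' = x' → α 1 * y = y →
        P (x + x') y = P x y + P x' y)
    (hsmul : ∀ (c : ℂ) (x y : A), α 1 * x = x → α 1 * y = y →
        P (c • x) y = c • P x y)
    -- hermitian symmetry
    (hstar : ∀ x y : A, α 1 * x = x → α 1 * y = y → star (P x y) = P y x)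
    -- positivity and non-degeneracy
    (hP : ∀ x : A, α 1 * x = x → 0 ≤ P x x)
    (hdef : ∀ x : A, α 1 * x = x → P x x = 0 → x = 0)
    -- imprimitivity condition:  x·⟨y,z⟩_A = ⟨x,y⟩^A·z
    (himp : ∀ x y z : A, α 1 * x = x → α 1 * y = y → α 1 * z = z →
        x * (star y * z) = α (P x y) * z) :
    (∀ a b : A, P (α 1 * (α b * a)) (α 1) = b * P (α 1 * a) (α 1)) ∧
    (∀ a : A, α (P (α 1 * a) (α 1)) = α 1 * a * α 1) ∧
    (∀ a : A, 0 ≤ P (α 1 * (a * star a)) (α 1)) := by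
  have hp : α 1 * α 1 = α 1 := by rw [← map_mul, one_mul]
  have hpstar : star (α 1) = α 1 := by rw [← map_star, star_one]
  have hmem : ∀ x : A, α 1 * (α 1 * x) = α 1 * x := by
    intro x; rw [← mul_assoc, hp]
  have hzero : ∀ y : A, α 1 * y = y → P 0 y = 0 := by
    intro y hy
    have := hsmul 0 0 y (by simp) hy
    simpa using this
  -- key compatibility:  P (x b) y = P x (y * star b)
  have key : ∀ x y b : A, α 1 * x = x → α 1 * y = y →
      P (x * b) y = P x (y * star b) := by
    intro x y b hx hy
    have hxb : α 1 * (x * b) = x * b := by rw [← mul_assoc, hx]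
    have hyb : α 1 * (y * star b) = y * star b := by rw [← mul_assoc, hy]
    set d := P (x * b) y - P x (y * star b) with hd
    have hact : ∀ z : A, α 1 * z = z → α d * z = 0 := by
      intro z hz
      have h1 := himp (x * b) y z hxb hy hz
      have h2 := himp x (y * star b) z hx hyb hz
      have : α (P (x * b) y) * z = α (P x (y * star b)) * z := by
        rw [← h1, ← h2, star_mul, star_star]
        noncomm_ring
      rw [hd, map_sub, sub_mul, this, sub_self]
    have hdP : ∀ z w : A, α 1 * z = z → α 1 * w = w → d * P z w = 0 := by
      intro z w hz hw
      have := hlin d z w hz hw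
      rw [hact z hz, hzero w hw] at this
      exact this.symm
    have hds : d * star d = 0 := by
      have hsd : star d = P y (x * b) - P (y * star b) x := by
        rw [hd, star_sub, hstar _ _ hxb hy, hstar _ _ hx hyb]
      rw [hsd, mul_sub, hdP y (x * b) hy hxb, hdP (y * star b) x hyb hx, sub_zero]
    have hd0 : d = 0 := by
      have h : ‖d‖ * ‖d‖ = 0 := by
        rw [← CStarRing.norm_self_mul_star (x := d), hds, norm_zero]
      exact norm_eq_zero.mp (mul_self_eq_zero.mp h)
    have := sub_eq_zero.mp (hd ▸ hd0)
    exact this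
  refine ⟨?_, ?_, ?_⟩
  · intro a b
    have h1 : α 1 * (α b * a) = α b * (α 1 * a) := by
      rw [← mul_assoc, ← mul_assoc, ← map_mul, ← map_mul, one_mul, mul_one]
    rw [h1]
    exact hlin b (α 1 * a) (α 1) (hmem a) hp
  · intro a
    have h := himp (α 1 * a) (α 1) (α 1) (hmem a) hp hp
    rw [hpstar, hp] at h
    have h2 : α (P (α 1 * a) (α 1)) * α 1 = α (P (α 1 * a) (α 1)) := by
      rw [← map_mul, mul_one]
    rw [h2] at h
    rw [← h, mul_assoc]
  · intro a
    have h1 : α 1 * (a * star a) = (α 1 * a) * star a := by rw [mul_assoc]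
    rw [h1, key (α 1 * a) (α 1) (star a) (hmem a) hp, star_star,
      show α 1 * a = α 1 * a from rfl]
    exact hP (α 1 * a) (hmem a)
end

section
/- Let X be a compact Hausdorff space, Δ ⊆ X a clopen subset, γ : Δ → X continuous, and α : C(X) → C(X) the endomorphism α(a)(x) = a(γ(x)) for x ∈ Δ and α(a)(x) = 0 otherwise. Then (C(X), α) admits a complete transfer operator if and only if γ(Δ) is open in X and γ : Δ → γ(Δ) is a homeomorphism; in that case the complete transfer operator is L(a)(x) = a(γ⁻¹(x)) for x ∈ γ(Δ) and L(a)(x) = 0 for x ∉ γ(Δ). -/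
/-!
`α` is `a ↦ 1_Δ · (a ∘ γ)`, so its kernel is the ideal of functions vanishing on the compact set
`γ(Δ)`; by Urysohn this ideal has a unit exactly when `γ(Δ)` is also open. Next,
`α(1) a α(1) = α(b)` says `a = b ∘ γ` on `Δ`, so the range is hereditary exactly when every
function on `Δ` factors through `γ`. Urysohn functions separating two points of a fibre show that
this forces `γ` to be injective on `Δ`; conversely `γ` is then a closed embedding of `Δ` and Tietze
extends `a ∘ (γ|_Δ)⁻¹`.

For a transfer operator `L`: if `k` vanishes on `γ(Δ)` then `α k = 0`, so
`k · L b = L (α k · b) = 0`, hence `L b` vanishes off `γ(Δ)`. On `γ(Δ)`, write `a = α c + r` with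
`c ∘ γ = a` on `Δ` and `r = 0` on `Δ`. Then `L (α c) = c · L 1`, where `L 1 ∘ γ = 1` on `Δ` by
`α L α = α`, while `r` lies in the corner `p C(X) p` of the projection `p = 1 - α 1`, which the
positive map `L` annihilates since `L p = 0`.
-/

open ComplexOrder Set

universe u v

section Separation

variable {X : Type*} [TopologicalSpace X]

theorem exists_continuousMap_eqOn_zero_apply_eq_one [NormalSpace X] [T1Space X] {K : Set X}
    (hK : IsClosed K) {x : X} (hx : x ∉ K) : ∃ k : C(X, ℂ), EqOn k 0 K ∧ k x = 1 := by
  obtain ⟨f, hf0, hf1, -⟩ := exists_continuous_zero_one_of_isClosed hK isClosed_singleton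
    (disjoint_singleton_right.mpr hx)
  refine ⟨(⟨Complex.ofReal, Complex.continuous_ofReal⟩ : C(ℝ, ℂ)).comp f, fun y hy => ?_, ?_⟩
  · simp [hf0 hy]
  · simp [hf1 rfl]

theorem exists_unit_eqOn_zero_iff_isOpen [NormalSpace X] [T1Space X] {K : Set X}
    (hK : IsClosed K) :
    (∃ e : C(X, ℂ), EqOn e 0 K ∧ ∀ k : C(X, ℂ), EqOn k 0 K → e * k = k) ↔ IsOpen K := by
  constructor
  · rintro ⟨e, he0, hunit⟩
    have he1 : ∀ x ∉ K, e x = 1 := fun x hx => by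
      obtain ⟨k, hk0, hk1⟩ := exists_continuousMap_eqOn_zero_apply_eq_one hK hx
      simpa [hk1] using congr($(hunit k hk0) x)
    have : K = (e ⁻¹' {1})ᶜ := by
      ext x
      by_cases hx : x ∈ K
      · simp [hx, he0 hx]
      · simp [hx, he1 x hx]
    rw [this]
    exact (isClosed_singleton.preimage e.continuous).isOpen_compl
  · intro hO
    have hc : IsClopen Kᶜ := IsClopen.compl ⟨hK, hO⟩
    refine ⟨LocallyConstant.charFn ℂ hc, fun x hx => ?_, fun k hk => ?_⟩
    · simp [LocallyConstant.coe_charFn, hx]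
    · ext x
      by_cases hx : x ∈ K
      · simp [hk hx]
      · simp [LocallyConstant.coe_charFn, hx]

theorem Set.InjOn.exists_eqOn_comp {Y : Type u} {E : Type v} [TopologicalSpace Y] [NormalSpace Y]
    [T2Space Y] [TopologicalSpace E] [TietzeExtension.{u, v} E] {Δ : Set X} (hΔ : IsCompact Δ)
    {γ : X → Y} (hγ : ContinuousOn γ Δ) (hinj : InjOn γ Δ) (a : C(X, E)) :
    ∃ b : C(Y, E), EqOn a (b ∘ γ) Δ := by
  have : CompactSpace Δ := isCompact_iff_compactSpace.mp hΔ
  have hemb : Topology.IsClosedEmbedding (Δ.domRestrict γ) :=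
    hγ.domRestrict.isClosedEmbedding hinj.injective
  obtain ⟨b, hb⟩ := (a.restrict Δ).exists_extension' hemb
  exact ⟨b, fun x hx => congr($(hb) ⟨x, hx⟩).symm⟩

theorem injOn_of_forall_exists_eqOn_comp [NormalSpace X] [T1Space X] {Y : Type*}
    [TopologicalSpace Y] {Δ : Set X} {γ : X → Y}
    (h : ∀ a : C(X, ℂ), ∃ b : C(Y, ℂ), EqOn a (b ∘ γ) Δ) : InjOn γ Δ := by
  intro x hx y hy hxy
  by_contra hne
  obtain ⟨k, hk0, hk1⟩ := exists_continuousMap_eqOn_zero_apply_eq_one isClosed_singleton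
    (mem_singleton_iff.not.mpr hne)
  obtain ⟨b, hb⟩ := h k
  have : k x = k y := by rw [hb hx, hb hy, Function.comp_apply, Function.comp_apply, hxy]
  simp [hk1, hk0 rfl] at this

end Separation

namespace PositiveLinearMap

variable {A B : Type*} [CStarAlgebra A] [PartialOrder A] [StarOrderedRing A]
  [AddCommMonoid B] [PartialOrder B] [Module ℂ B]

theorem map_mul_mul_eq_zero (f : A →ₚ[ℂ] B) {p : A} (hp : IsStarProjection p) (hfp : f p = 0)
    (a : A) : f (p * a * p) = 0 := by
  have ha : a ∈ Submodule.span ℂ {a : A | 0 ≤ a} := CStarAlgebra.span_nonneg (A := A) ▸ trivial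
  induction ha using Submodule.span_induction with
  | mem s hs =>
    have hle : p * s * p ≤ (‖s‖ : ℂ) • p := by
      calc p * s * p ≤ p * algebraMap ℝ A ‖s‖ * p :=
            hp.isSelfAdjoint.conjugate_le_conjugate
              (IsSelfAdjoint.of_nonneg hs).le_algebraMap_norm_self
        _ = (‖s‖ : ℂ) • p := by
            rw [Algebra.algebraMap_eq_smul_one, mul_smul_one, smul_mul_assoc,
              hp.isIdempotentElem.eq, ← Complex.coe_smul]
    refine le_antisymm ?_ (f.map_nonneg (hp.isSelfAdjoint.conjugate_nonneg hs))
    calc f (p * s * p) ≤ f ((‖s‖ : ℂ) • p) := f.monotone' hle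
      _ = 0 := by rw [map_smul, hfp, smul_zero]
  | zero => simp
  | add x y _ _ hx hy => rw [mul_add, add_mul, map_add, hx, hy, add_zero]
  | smul c x _ hx => rw [mul_smul_comm, smul_mul_assoc, map_smul, hx, smul_zero]

end PositiveLinearMap

def IsInducedBy {X : Type*} [TopologicalSpace X] (α : C(X, ℂ) → C(X, ℂ)) (Δ : Set X)
    (γ : X → X) : Prop :=
  ∀ (a : C(X, ℂ)) (x : X), (x ∈ Δ → α a x = a (γ x)) ∧ (x ∉ Δ → α a x = 0)

namespace IsInducedBy

variable {X : Type*} [TopologicalSpace X] {Δ : Set X} {γ : X → X} {α : C(X, ℂ) → C(X, ℂ)}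

theorem apply_of_mem (hα : IsInducedBy α Δ γ) (a : C(X, ℂ)) {x : X} (hx : x ∈ Δ) :
    α a x = a (γ x) :=
  (hα a x).1 hx

theorem apply_of_notMem (hα : IsInducedBy α Δ γ) (a : C(X, ℂ)) {x : X} (hx : x ∉ Δ) :
    α a x = 0 :=
  (hα a x).2 hx

theorem eq_zero_iff (hα : IsInducedBy α Δ γ) {k : C(X, ℂ)} :
    α k = 0 ↔ EqOn k 0 (γ '' Δ) := by
  constructor
  · rintro hk _ ⟨x, hx, rfl⟩
    simpa [hα.apply_of_mem k hx] using congr($hk x)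
  · intro hk
    ext x
    by_cases hx : x ∈ Δ
    · simp [hα.apply_of_mem k hx, hk (mem_image_of_mem γ hx)]
    · simp [hα.apply_of_notMem k hx]

theorem mul_mul_eq_iff (hα : IsInducedBy α Δ γ) {a b : C(X, ℂ)} :
    α 1 * a * α 1 = α b ↔ EqOn a (b ∘ γ) Δ := by
  constructor
  · intro h x hx
    simpa [hα.apply_of_mem 1 hx, hα.apply_of_mem b hx] using congr($h x)
  · intro h
    ext x
    by_cases hx : x ∈ Δ
    · simp [hα.apply_of_mem 1 hx, hα.apply_of_mem b hx, h hx]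
    · simp [hα.apply_of_notMem 1 hx, hα.apply_of_notMem b hx]

theorem isStarProjection_one_sub (hα : IsInducedBy α Δ γ) : IsStarProjection (1 - α 1) := by
  refine ⟨?_, ?_⟩ <;> ext x <;> by_cases hx : x ∈ Δ
  all_goals first | simp [hα.apply_of_mem 1 hx] | simp [hα.apply_of_notMem 1 hx]

theorem one_sub_mul_mul_one_sub (hα : IsInducedBy α Δ γ) {r : C(X, ℂ)} (hr : EqOn r 0 Δ) :
    (1 - α 1) * r * (1 - α 1) = r := by
  ext x
  by_cases hx : x ∈ Δ
  · simp [hr hx]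
  · simp [hα.apply_of_notMem 1 hx]

theorem apply_eq_zero_of_notMem_image [NormalSpace X] [T1Space X] (hα : IsInducedBy α Δ γ)
    (hK : IsClosed (γ '' Δ)) (L : C(X, ℂ) →ₗ[ℂ] C(X, ℂ))
    (hL : ∀ a b : C(X, ℂ), L (α a * b) = a * L b) (a : C(X, ℂ)) {x : X} (hx : x ∉ γ '' Δ) :
    L a x = 0 := by
  obtain ⟨k, hk0, hk1⟩ := exists_continuousMap_eqOn_zero_apply_eq_one hK hx
  have h := hL k a
  rw [hα.eq_zero_iff.mpr hk0, zero_mul, map_zero] at h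
  simpa [hk1] using congr($h x).symm

theorem apply_apply_of_eqOn_comp [CompactSpace X] (hα : IsInducedBy α Δ γ)
    (L : C(X, ℂ) →ₚ[ℂ] C(X, ℂ)) (hL : ∀ a b : C(X, ℂ), L (α a * b) = a * L b)
    (hLα : ∀ a : C(X, ℂ), α (L (α a)) = α a) {a c : C(X, ℂ)} (hc : EqOn a (c ∘ γ) Δ) {d : X}
    (hd : d ∈ Δ) : L a (γ d) = a d := by
  have hL1 : L (α 1) = L 1 := by simpa using hL 1 1
  have hL1d : L 1 (γ d) = 1 := by
    simpa [hα.apply_of_mem _ hd, hL1] using congr($(hLα 1) d)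
  have hr : L (a - α c) = 0 := by
    have hr0 : EqOn (a - α c) 0 Δ := fun x hx => by simp [hα.apply_of_mem c hx, hc hx]
    rw [← hα.one_sub_mul_mul_one_sub hr0]
    exact L.map_mul_mul_eq_zero hα.isStarProjection_one_sub (by rw [map_sub, hL1, sub_self]) _
  have hLa : L a = c * L 1 := by
    rw [← add_sub_cancel (α c * 1) a, map_add, hL, mul_one, hr, add_zero]
  simp [hLa, hL1d, hc hd]

end IsInducedBy

/-- For the endomorphism α of C(X) induced by a continuous map
γ : Δ → X on a clopen Δ ⊆ X, the system (C(X), α) admits a complete transfer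
operator (i.e. α has unital kernel and hereditary range) iff γ(Δ) is open and
γ : Δ → γ(Δ) is a homeomorphism (equivalently, by compactness, injective);
in that case the complete transfer operator is L(a)(x) = a(γ⁻¹(x)) on γ(Δ)
and 0 elsewhere. -/
theorem commutative_admits_complete_transfer_iff
    {X : Type*} [TopologicalSpace X] [CompactSpace X] [T2Space X] [Nonempty X]
    (Δ : Set X) (hΔ : IsClopen Δ) (γ : X → X) (hγ : ContinuousOn γ Δ)
    (α : C(X, ℂ) →⋆ₐ[ℂ] C(X, ℂ))
    (hα : ∀ (a : C(X, ℂ)) (x : X),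
      (x ∈ Δ → α a x = a (γ x)) ∧ (x ∉ Δ → α a x = 0)) :
    -- the "admits a complete transfer operator" condition:
    (((∃ e : C(X, ℂ), α e = 0 ∧ ∀ k : C(X, ℂ), α k = 0 → e * k = k) ∧
      (∀ a : C(X, ℂ), ∃ b : C(X, ℂ), α 1 * a * α 1 = α b)) ↔
      (IsOpen (γ '' Δ) ∧ Set.InjOn γ Δ)) ∧
    -- the formula for the complete transfer operator:
    (IsOpen (γ '' Δ) → Set.InjOn γ Δ →
      ∀ L : C(X, ℂ) →L[ℂ] C(X, ℂ),
        (∀ a : C(X, ℂ), (∀ x, 0 ≤ a x) → ∀ x, 0 ≤ L a x) →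
        (∀ a b : C(X, ℂ), L (α a * b) = a * L b) →
        (∀ a : C(X, ℂ), α (L (α a)) = α a) →
        ∀ (a : C(X, ℂ)) (x : X),
          (x ∈ γ '' Δ → L a x = a (Function.invFunOn γ Δ x)) ∧
          (x ∉ γ '' Δ → L a x = 0)) := by
  have hind : IsInducedBy α Δ γ := hα
  have hΔc : IsCompact Δ := hΔ.isClosed.isCompact
  have hK : IsClosed (γ '' Δ) := (hΔc.image_of_continuousOn hγ).isClosed
  refine ⟨and_congr ?_ ?_, fun _ hinj L hpos hL hLα a x =>
    ⟨?_, hind.apply_eq_zero_of_notMem_image hK L.toLinearMap hL a⟩⟩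
  · simp_rw [hind.eq_zero_iff]
    exact exists_unit_eqOn_zero_iff_isOpen hK
  · simp_rw [hind.mul_mul_eq_iff]
    exact ⟨injOn_of_forall_exists_eqOn_comp, fun hinj a => hinj.exists_eqOn_comp hΔc hγ a⟩
  · rintro ⟨d, hd, rfl⟩
    obtain ⟨c, hc⟩ := hinj.exists_eqOn_comp hΔc hγ a
    rw [hinj.leftInvOn_invFunOn hd]
    refine hind.apply_apply_of_eqOn_comp (.mk₀ L.toLinearMap fun b hb => ?_) hL hLα hc hd
    exact ContinuousMap.le_def.2 (hpos b (ContinuousMap.le_def.1 hb))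
end

section
/- Let X be a compact Hausdorff space and γ : Δ → X a continuous map on a clopen set Δ ⊆ X such that γ is finite-to-one and there is a finite open cover {V_i} of Δ with γ injective on each V_i. If L is a transfer operator for the induced system (C(X), α), written as L(a)(x) = Σ_{y ∈ γ⁻¹(x)} ρ(y) a(y) for x ∈ γ(Δ), then the function ρ : Δ → [0, ∞) is continuous. -/
open ComplexOrder

/-- If γ : Δ → X (Δ clopen) is finite-to-one and Δ has a finite
open cover on each piece of which γ is injective, then for any transfer
operator L for (C(X), α), written L(a)(x) = Σ_{y ∈ γ⁻¹(x)} ρ(y) a(y) on γ(Δ),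
the coefficient function ρ is continuous on Δ. -/
theorem transfer_coefficient_continuous
    {X : Type*} [TopologicalSpace X] [CompactSpace X] [T2Space X]
    (Δ : Set X) (hΔ : IsClopen Δ) (γ : X → X) (hγ : ContinuousOn γ Δ)
    (α : C(X, ℂ) →⋆ₐ[ℂ] C(X, ℂ))
    (hα : ∀ (a : C(X, ℂ)) (x : X),
      (x ∈ Δ → α a x = a (γ x)) ∧ (x ∉ Δ → α a x = 0))
    -- γ is finite-to-one
    (hfin : ∀ x : X, {y ∈ Δ | γ y = x}.Finite)
    -- a finite open cover of Δ on each piece of which γ is injective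
    (hcov : ∃ (n : ℕ) (V : Fin n → Set X), (∀ i, IsOpen (V i)) ∧
      Δ ⊆ ⋃ i, V i ∧ ∀ i, Set.InjOn γ (V i))
    -- L is a transfer operator for (C(X), α)
    (L : C(X, ℂ) →L[ℂ] C(X, ℂ))
    (hpos : ∀ a : C(X, ℂ), (∀ x, 0 ≤ a x) → ∀ x, 0 ≤ L a x)
    (htr : ∀ a b : C(X, ℂ), L (α a * b) = a * L b)
    -- L is written via the coefficient function ρ
    (ρ : X → ℝ) (hρ0 : ∀ y ∈ Δ, 0 ≤ ρ y)
    (hform : ∀ (a : C(X, ℂ)) (x : X), x ∈ γ '' Δ →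
      L a x = ∑ᶠ y ∈ {y | y ∈ Δ ∧ γ y = x}, (ρ y : ℂ) * a y) :
    ContinuousOn ρ Δ := by
  intro y₀ hy₀
  obtain ⟨n, V, hVopen, hVcov, hVinj⟩ := hcov
  obtain ⟨_, ⟨i, rfl⟩, hyi⟩ := hVcov hy₀
  -- compact neighborhood K of y₀ inside V i
  obtain ⟨K, hKcomp, hy₀K, hKV⟩ := exists_compact_subset (hVopen i) hyi
  -- Urysohn function: 0 on (V i)ᶜ, 1 on K
  obtain ⟨f, hf0, hf1, hf01⟩ := exists_continuous_zero_one_of_isClosed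
    (hVopen i).isClosed_compl hKcomp.isClosed
    (Set.disjoint_compl_left_iff_subset.mpr hKV)
  set a : C(X, ℂ) := ⟨fun z => (f z : ℂ), Complex.continuous_ofReal.comp f.continuous⟩
    with ha_def
  have ha_supp : ∀ z, a z ≠ 0 → z ∈ V i := by
    intro z hz
    by_contra hzV
    exact hz (by simp [ha_def, hf0 hzV, Pi.zero_apply])
  -- on interior K ∩ Δ, ρ y = Re (L a (γ y))
  have key : ∀ y ∈ interior K ∩ Δ, ρ y = ((L a) (γ y)).re := by
    rintro y ⟨hyK, hyΔ⟩
    have hyV : y ∈ V i := hKV (interior_subset hyK)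
    have hx : γ y ∈ γ '' Δ := ⟨y, hyΔ, rfl⟩
    have hfinx := hfin (γ y)
    have hsum : (L a) (γ y) = ∑ z ∈ hfinx.toFinset, (ρ z : ℂ) * a z := by
      rw [hform a (γ y) hx, ← finsum_mem_coe_finset]
      congr 1
      simp [Set.Finite.coe_toFinset]
    have hone : a y = 1 := by
      simp [ha_def, hf1 (interior_subset hyK)]
    have hsingle : ∑ z ∈ hfinx.toFinset, (ρ z : ℂ) * a z = (ρ y : ℂ) := by
      rw [Finset.sum_eq_single y]
      · rw [hone, mul_one]
      · intro z hz hzy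
        rcases eq_or_ne (a z) 0 with h | h
        · rw [h, mul_zero]
        · exact absurd (hVinj i (ha_supp z h) hyV
            (by simpa using (hfinx.mem_toFinset.mp hz).2)) hzy
      · intro hy
        exact absurd (hfinx.mem_toFinset.mpr ⟨hyΔ, rfl⟩) hy
    rw [hsum, hsingle, Complex.ofReal_re]
  -- conclude continuity within Δ at y₀
  have hg : ContinuousWithinAt (fun y => ((L a) (γ y)).re) Δ y₀ :=
    (Complex.continuous_re.comp_continuousOn
      ((L a).continuous.comp_continuousOn hγ)).continuousWithinAt hy₀
  refine hg.congr_of_eventuallyEq ?_ (key y₀ ⟨hy₀K, hy₀⟩)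
  filter_upwards [mem_nhdsWithin_iff_exists_mem_nhds_inter.mpr
    ⟨interior K, mem_interior_iff_mem_nhds.mp (by simpa using hy₀K), Set.Subset.rfl⟩]
    with y hy
  exact key y hy
end

section
/- Let H be a separable Hilbert space and let the Cantor function γ : [0,1] → [0,1] (the Devil's staircase) define α(a) = a ∘ γ on C([0,1]). Then the only lower semicontinuous section Φ : [0,1] → F([0,1]) of γ (a map with Φ(x) ⊆ γ⁻¹(x) closed, such that {x : V ∩ Φ(x) ≠ ∅} is open for every open V) is Φ ≡ ∅; consequently the only transfer operator for (C([0,1]), α) is the zero operator. -/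
open ComplexOrder unitInterval Set Filter Topology

/-!
Off the Cantor set γ is locally constant, and the Cantor set has empty interior, so the values
of γ at points where it is locally constant are dense. Let `z` be such a point with
`c = γ z ∈ (0, 1)`.

A lower semicontinuous section `Φ` of `γ` cannot contain `z`: for a neighbourhood `O` of `z` on
which `γ = c`, the open set `{x | O ∩ Φ x ≠ ∅}` would be `{c}`. A point `w < z` of `Φ c` would make
`{x | Φ x meets (-∞, z)}` an open neighbourhood of `c` inside `[0, c]`, and `w > z` is symmetric.
Hence `Φ c = ∅`, and the open set `{x | Φ x ≠ ∅}` misses a dense set.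

For a transfer operator, `L f y = 0` as soon as `f` vanishes near `γ⁻¹ {y}`, since then
`f = (a ∘ γ) f` for some `a` with `a y = 0`. Cutting `f` in two inside a plateau around `z`, one
piece is killed by `L` at every point above `c` and the other at every point below, so by
continuity `L f c = 0`; thus `L f` also vanishes on a dense set.
-/

theorem isTotallyDisconnected_cantorSet : IsTotallyDisconnected cantorSet :=
  totallyDisconnectedSpace_subtype_iff.1 cantorSetHomeomorphNatToBool.symm.totallyDisconnectedSpace

theorem exists_mem_Ioo_notMem_cantorSet {a b : ℝ} (hab : a < b) : ∃ x ∈ Ioo a b, x ∉ cantorSet := by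
  by_contra! h
  obtain ⟨x, hx⟩ := nonempty_Ioo.2 hab
  obtain ⟨y, hy⟩ := nonempty_Ioo.2 hx.1
  exact hy.2.ne (isTotallyDisconnected_cantorSet _ h isPreconnected_Ioo ⟨hy.1, hy.2.trans hx.2⟩ hx)

theorem dense_notMem_cantorSet : Dense {z : I | (z : ℝ) ∉ cantorSet} := by
  refine dense_iff_inter_open.2 fun U hU hne => ?_
  obtain ⟨a, b, hab, hsub⟩ := hU.exists_Ioo_subset hne
  obtain ⟨x, hx, hxC⟩ := exists_mem_Ioo_notMem_cantorSet (Subtype.coe_lt_coe.2 hab)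
  have hxI : x ∈ I := ⟨a.2.1.trans hx.1.le, hx.2.le.trans b.2.2⟩
  exact ⟨⟨x, hxI⟩, hsub hx, hxC⟩

theorem dense_image_eventually_eq_sdiff {γ : I → I} (hcont : Continuous γ) (h0 : γ 0 = 0)
    (h1 : γ 1 = 1) (hconst : ∀ x : I, (x : ℝ) ∉ cantorSet → ∃ W ∈ 𝓝 x, ∀ y ∈ W, γ y = γ x) :
    Dense (γ '' {z | ∀ᶠ u in 𝓝 z, γ u = γ z} \ {0, 1}) := by
  have hsurj : Function.Surjective γ := fun c =>
    intermediate_value_univ 0 1 hcont (by rw [h0, h1]; exact ⟨c.2.1, c.2.2⟩)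
  refine (hsurj.denseRange.dense_image hcont ?_).sdiff_finite (toFinite _)
  exact dense_notMem_cantorSet.mono fun z hz => eventually_iff_exists_mem.2 (hconst z hz)

theorem unitInterval.not_isMin_and_not_isMax {c : I} (hc : c ∉ ({0, 1} : Set I)) :
    ¬IsMin c ∧ ¬IsMax c := by
  simp only [mem_insert_iff, mem_singleton_iff, not_or] at hc
  exact ⟨not_isMin_iff.2 ⟨0, unitInterval.pos_iff_ne_zero.2 hc.1⟩,
    not_isMax_iff.2 ⟨1, unitInterval.lt_one_iff_ne_one.2 hc.2⟩⟩

section LowerSemicontinuousSection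

variable {X Y : Type*} [TopologicalSpace X] [TopologicalSpace Y] {γ : X → Y} {Φ : Y → Set X}

theorem notMem_section_of_eventually_eq (hsect : ∀ y, Φ y ⊆ γ ⁻¹' {y})
    (hlsc : ∀ V, IsOpen V → IsOpen {y | (V ∩ Φ y).Nonempty}) {z : X}
    (hz : ∀ᶠ u in 𝓝 z, γ u = γ z) (hopen : ¬IsOpen ({γ z} : Set Y)) (y : Y) : z ∉ Φ y := by
  intro hzy
  obtain ⟨O, hOγ, hO, hzO⟩ := eventually_nhds_iff.1 hz
  have hfib : {y | (O ∩ Φ y).Nonempty} = {γ z} := by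
    refine Subset.antisymm (fun y' ⟨u, huO, huΦ⟩ => ?_) ?_
    · rw [mem_singleton_iff, ← hOγ u huO]
      exact (hsect y' huΦ).symm
    · rintro _ rfl
      exact ⟨z, hzO, (hsect y hzy : γ z = y) ▸ hzy⟩
  exact hopen (hfib ▸ hlsc O hO)

variable [LinearOrder X] [OrderTopology X] [LinearOrder Y] [OrderTopology Y] [DenselyOrdered Y]

theorem isMax_of_mem_section_of_lt (hmono : Monotone γ) (hsect : ∀ y, Φ y ⊆ γ ⁻¹' {y})
    (hlsc : ∀ V, IsOpen V → IsOpen {y | (V ∩ Φ y).Nonempty}) {w z : X}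
    (hw : w ∈ Φ (γ z)) (hwz : w < z) : IsMax (γ z) := by
  refine IsMax.of_disjoint_nhds_Ioi ((hlsc _ isOpen_Iio).mem_nhds ⟨w, hwz, hw⟩) ?_
  rw [disjoint_left]
  rintro y ⟨u, huz, huΦ⟩
  exact not_lt.2 ((hsect y huΦ : γ u = y) ▸ hmono huz.le)

theorem isMin_of_mem_section_of_gt (hmono : Monotone γ) (hsect : ∀ y, Φ y ⊆ γ ⁻¹' {y})
    (hlsc : ∀ V, IsOpen V → IsOpen {y | (V ∩ Φ y).Nonempty}) {w z : X}
    (hw : w ∈ Φ (γ z)) (hzw : z < w) : IsMin (γ z) :=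
  isMax_of_mem_section_of_lt (X := Xᵒᵈ) (Y := Yᵒᵈ) hmono.dual hsect hlsc hw hzw

theorem section_eq_empty_of_eventually_eq (hmono : Monotone γ) (hsect : ∀ y, Φ y ⊆ γ ⁻¹' {y})
    (hlsc : ∀ V, IsOpen V → IsOpen {y | (V ∩ Φ y).Nonempty}) {z : X}
    (hz : ∀ᶠ u in 𝓝 z, γ u = γ z) (hmin : ¬IsMin (γ z)) (hmax : ¬IsMax (γ z)) :
    Φ (γ z) = ∅ := by
  refine eq_empty_of_forall_notMem fun w hw => ?_
  rcases lt_trichotomy w z with hwz | rfl | hzw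
  · exact hmax (isMax_of_mem_section_of_lt hmono hsect hlsc hw hwz)
  · have hnopen : ¬IsOpen ({γ w} : Set Y) := fun h =>
      hmax (IsMax.of_disjoint_nhds_Ioi (h.mem_nhds rfl) (by simp))
    exact notMem_section_of_eventually_eq hsect hlsc hz hnopen _ hw
  · exact hmin (isMin_of_mem_section_of_gt hmono hsect hlsc hw hzw)

end LowerSemicontinuousSection

section TransferOperator

variable {X Y : Type*} [TopologicalSpace X] [TopologicalSpace Y]

theorem transfer_apply_eq_zero_of_eqOn [CompactSpace X] [T2Space Y] [NormalSpace Y]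
    (γ : C(X, Y)) {L : C(X, ℂ) → C(Y, ℂ)} (hL : ∀ a b, L (a.comp γ * b) = a * L b)
    {f : C(X, ℂ)} {y : Y} {U : Set X} (hU : IsOpen U) (hyU : γ ⁻¹' {y} ⊆ U) (hf : EqOn f 0 U) :
    L f y = 0 := by
  have hK : IsClosed (γ '' Uᶜ) := (hU.isClosed_compl.isCompact.image γ.continuous).isClosed
  have hyK : Disjoint {y} (γ '' Uᶜ) := by
    rw [disjoint_singleton_left]
    rintro ⟨u, hu, rfl⟩
    exact hu (hyU rfl)
  obtain ⟨a, ha0, ha1, -⟩ := exists_continuous_zero_one_of_isClosed isClosed_singleton hK hyK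
  set a' : C(Y, ℂ) := (Complex.ofRealCLM : C(ℝ, ℂ)).comp a
  have hfa : a'.comp γ * f = f := by
    ext u
    by_cases hu : u ∈ U
    · simp [hf hu]
    · simp [a', ha1 (mem_image_of_mem γ hu)]
  have hay : a' y = 0 := by simp [a', ha0 rfl]
  have := congr($(hL a' f) y)
  rwa [hfa, ContinuousMap.mul_apply, hay, zero_mul] at this

theorem transfer_apply_eq_zero_of_eventually_eq [LinearOrder X] [OrderTopology X]
    [CompactSpace X] [∀ x : X, NeBot (𝓝[≠] x)] [LinearOrder Y] [OrderTopology Y]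
    [DenselyOrdered Y] (γ : C(X, Y)) (hmono : Monotone γ) (L : C(X, ℂ) →+ C(Y, ℂ))
    (hL : ∀ a b, L (a.comp γ * b) = a * L b) {z : X} (hz : ∀ᶠ u in 𝓝 z, γ u = γ z)
    (hmin : ¬IsMin (γ z)) (hmax : ¬IsMax (γ z)) (f : C(X, ℂ)) : L f (γ z) = 0 := by
  obtain ⟨a, b, ⟨haz, hzb⟩, hab_nhds, hab⟩ := exists_Icc_mem_subset_of_mem_nhds hz
  have hab_lt : a < b := by
    by_contra! hba
    have hzz : Icc a b ⊆ {z} := fun u hu =>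
      le_antisymm (hu.2.trans (hba.trans haz)) ((hzb.trans hba).trans hu.1)
    refine not_isOpen_singleton z ((isOpen_singleton_iff_nhds_eq_pure z).2 ?_)
    exact le_antisymm (le_pure_iff.2 (mem_of_superset hab_nhds hzz)) (pure_le_nhds z)
  have hγa : γ a = γ z := hab ⟨le_rfl, hab_lt.le⟩
  have hγb : γ b = γ z := hab ⟨hab_lt.le, le_rfl⟩
  obtain ⟨φ, hφa, hφb, -⟩ := exists_continuous_zero_one_of_isClosed (isClosed_Iic (a := a))
    (isClosed_Ici (a := b)) (Iic_disjoint_Ici.2 hab_lt.not_ge)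
  set φ' : C(X, ℂ) := (Complex.ofRealCLM : C(ℝ, ℂ)).comp φ
  have hleft : EqOn (L (f * (1 - φ'))) 0 (Ioi (γ z)) := by
    intro y hy
    refine transfer_apply_eq_zero_of_eqOn γ hL (isOpen_Ioi (a := b)) (fun u hu => ?_)
      (fun u hu => ?_)
    · exact hmono.reflect_lt (hγb ▸ (hu : γ u = y) ▸ hy)
    · simp [φ', hφb (mem_Ici.2 hu.le)]
  have hright : EqOn (L (f * φ')) 0 (Iio (γ z)) := by
    intro y hy
    refine transfer_apply_eq_zero_of_eqOn γ hL (isOpen_Iio (a := a)) (fun u hu => ?_)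
      (fun u hu => ?_)
    · exact hmono.reflect_lt (hγa ▸ (hu : γ u = y) ▸ hy)
    · simp [φ', hφa (mem_Iic.2 hu.le)]
  have hc_left : γ z ∈ closure (Ioi (γ z)) := closure_Ioi' (not_isMax_iff.1 hmax) ▸ self_mem_Ici
  have hc_right : γ z ∈ closure (Iio (γ z)) := closure_Iio' (not_isMin_iff.1 hmin) ▸ self_mem_Iic
  calc L f (γ z) = L (f * (1 - φ')) (γ z) + L (f * φ') (γ z) := by
        rw [← ContinuousMap.add_apply, ← map_add, ← mul_add, sub_add_cancel, mul_one]
    _ = 0 := by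
        rw [hleft.closure (L _).continuous continuous_const hc_left,
          hright.closure (L _).continuous continuous_const hc_right, Pi.zero_apply, add_zero]

end TransferOperator

/-- Let γ : [0,1] → [0,1] be the Cantor function (the continuous
nondecreasing map with γ(0) = 0, γ(1) = 1, locally constant off the Cantor
set), and α(a) = a ∘ γ on C([0,1]). Then the only lower semicontinuous section
Φ of γ (Φ(x) ⊆ γ⁻¹(x) closed, {x : V ∩ Φ(x) ≠ ∅} open for every open V) is
Φ ≡ ∅, and consequently the only transfer operator for (C([0,1]), α) is 0. -/
theorem cantor_function_no_transfer
    (γ : I → I) (hcont : Continuous γ) (hmono : Monotone γ)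
    (h0 : γ 0 = 0) (h1 : γ 1 = 1)
    -- γ is locally constant off the Cantor set (Devil's staircase)
    (hconst : ∀ x : I, (x : ℝ) ∉ cantorSet →
      ∃ W ∈ nhds x, ∀ y ∈ W, γ y = γ x)
    (α : C(I, ℂ) →⋆ₐ[ℂ] C(I, ℂ))
    (hα : ∀ (a : C(I, ℂ)) (x : I), α a x = a (γ x)) :
    -- the only lower semicontinuous section of γ is identically ∅
    (∀ Φ : I → Set I, (∀ x, IsClosed (Φ x)) → (∀ x, Φ x ⊆ γ ⁻¹' {x}) →
      (∀ V : Set I, IsOpen V → IsOpen {x : I | (V ∩ Φ x).Nonempty}) →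
      ∀ x, Φ x = ∅) ∧
    -- consequently, the only transfer operator for (C([0,1]), α) is zero
    (∀ L : C(I, ℂ) →L[ℂ] C(I, ℂ),
      (∀ a : C(I, ℂ), (∀ x, 0 ≤ a x) → ∀ x, 0 ≤ L a x) →
      (∀ a b : C(I, ℂ), L (α a * b) = a * L b) →
      L = 0) := by
  have hdense := dense_image_eventually_eq_sdiff hcont h0 h1 hconst
  refine ⟨fun Φ _ hsect hlsc x => ?_, fun L _ htrans => ?_⟩
  · have hN : IsOpen {x | (Φ x).Nonempty} := by simpa using hlsc univ isOpen_univ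
    by_contra hx
    obtain ⟨_, hcN, ⟨z, hz, rfl⟩, hc⟩ :=
      hdense.inter_open_nonempty _ hN ⟨x, nonempty_iff_ne_empty.2 hx⟩
    obtain ⟨hmin, hmax⟩ := unitInterval.not_isMin_and_not_isMax hc
    exact hcN.ne_empty (section_eq_empty_of_eventually_eq hmono hsect hlsc hz hmin hmax)
  · have hL : ∀ a b, L (a.comp ⟨γ, hcont⟩ * b) = a * L b := fun a b => by
      rw [← htrans]
      congr
      ext x
      exact (hα a x).symm
    ext1 f
    refine DFunLike.coe_injective <| Continuous.ext_on hdense (L f).continuous continuous_const ?_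
    rintro _ ⟨⟨z, hz, rfl⟩, hc⟩
    obtain ⟨hmin, hmax⟩ := unitInterval.not_isMin_and_not_isMax hc
    exact transfer_apply_eq_zero_of_eventually_eq ⟨γ, hcont⟩ hmono L hL hz hmin hmax f
end
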